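/- arXiv:1602.07760 — 14 statements merged into one kernel-verified Lean document; each statement's English description precedes it below -/
import Mathlib

section
/- Let α, β, L^x, L^y be positive reals. For s ∈ {x,y} define ub^s := min(√(αβ), L^s) and lb^s := α / ub^s. If positive reals ℓ^x, ℓ^y satisfy lb^s ≤ ℓ^s ≤ ub^s for both s ∈ {x,y} and ℓ^x · ℓ^y ≥ α, then max(ℓ^x/ℓ^y, ℓ^y/ℓ^x) ≤ β; that is, the width bounds together with the area constraint imply the aspect-ratio constraint. -/
/-- With `ub^s := min (√(αβ)) L^s` and `lb^s := α / ub^s`, the width bounds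
`lb^s ≤ ℓ^s ≤ ub^s` together with the area constraint `ℓ^x·ℓ^y ≥ α` imply the aspect-ratio
constraint `max (ℓ^x/ℓ^y) (ℓ^y/ℓ^x) ≤ β`. -/
theorem aspect_ratio_of_width_bounds (α β Lx Ly lx ly : ℝ)
    (hα : 0 < α) (hβ : 0 < β) (hLx : 0 < Lx) (hLy : 0 < Ly)
    (hlx : 0 < lx) (hly : 0 < ly)
    (hubx : lx ≤ min (Real.sqrt (α * β)) Lx)
    (huby : ly ≤ min (Real.sqrt (α * β)) Ly)
    (hlbx : α / min (Real.sqrt (α * β)) Lx ≤ lx)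
    (hlby : α / min (Real.sqrt (α * β)) Ly ≤ ly)
    (harea : α ≤ lx * ly) :
    max (lx / ly) (ly / lx) ≤ β := by
  set s := Real.sqrt (α * β) with hs
  have hs0 : 0 < s := Real.sqrt_pos.mpr (by positivity)
  have hs2 : s * s = α * β := Real.mul_self_sqrt (by positivity)
  have hxs : lx ≤ s := le_trans hubx (min_le_left _ _)
  have hys : ly ≤ s := le_trans huby (min_le_left _ _)
  have hminx : 0 < min s Lx := lt_min hs0 hLx
  have hminy : 0 < min s Ly := lt_min hs0 hLy
  have hxlb : α / s ≤ lx :=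
    le_trans (div_le_div_of_nonneg_left hα.le hminx (min_le_left _ _)) hlbx
  have hylb : α / s ≤ ly :=
    le_trans (div_le_div_of_nonneg_left hα.le hminy (min_le_left _ _)) hlby
  have key : ∀ a b : ℝ, 0 < a → 0 < b → a ≤ s → α / s ≤ b → a / b ≤ β := by
    intro a b ha hb has hbs
    rw [div_le_iff₀ hb]
    calc a ≤ s := has
    _ = β * (α / s) := by field_simp; linarith [hs2]
    _ ≤ β * b := by nlinarith
  exact max_le (key lx ly hlx hly hxs hylb) (key ly lx hly hlx hys hxlb)
end

section
/- The set of points (c,ℓ,u) ∈ ℝ^8 × {0,1}^4 satisfying the unary formulation — namely, for all s ∈ {x,y} and both orderings {p,q} = {i,j}: (1/2)ℓ^s_p + lb^s_q·u^s_{q,p} ≤ c^s_p ≤ L^s − (1/2)ℓ^s_p − lb^s_q·u^s_{p,q}; c^s_p + (1/2)ℓ^s_p ≤ c^s_q − (1/2)ℓ^s_q + L^s(1 − u^s_{p,q}); ℓ^s_p ≥ lb^s_p; together with u^x_{i,j} + u^x_{j,i} + u^y_{i,j} + u^y_{j,i} = 1 — is exactly equal to the embedding Em(Q^lb, D^4,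 U^4), i.e., the union over the four branches B_p ←_s B_q of the sets {(c,ℓ) ∈ Q^lb : B_p ←_s B_q} × {code with u^s_{p,q} = 1}. -/
/-!  Direction index: `0 = x`, `1 = y`.  Box index: `0 = i`, `1 = j`. -/

/-- Pairwise layout data, indexed by direction `s : Fin 2` and box `k : Fin 2`. -/
abbrev Vec2 := Fin 2 → Fin 2 → ℝ

/-- Box `p` precedes box `q` in direction `s`. -/
def pre (c l : Vec2) (s p q : Fin 2) : Prop :=
  c s p + l s p / 2 ≤ c s q - l s q / 2

/-- Box `p` does not precede box `q` in direction `s`. -/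
def npre (c l : Vec2) (s p q : Fin 2) : Prop :=
  c s q - l s q / 2 ≤ c s p + l s p / 2

/-- Stay-on-the-floor constraints. -/
def sitb (L : Fin 2 → ℝ) (c l : Vec2) : Prop :=
  ∀ s k, l s k / 2 ≤ c s k ∧ c s k ≤ L s - l s k / 2

/-- The four-branch non-overlap disjunction `D⁴`. -/
def D4 (c l : Vec2) : Prop :=
  pre c l 1 0 1 ∨ pre c l 0 0 1 ∨ pre c l 1 1 0 ∨ pre c l 0 1 0

/-- The eight branches of the refined disjunction `D⁸`. -/
def br (c l : Vec2) : Fin 8 → Prop :=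
  ![pre c l 1 0 1 ∧ npre c l 0 0 1 ∧ npre c l 0 1 0,
    pre c l 1 0 1 ∧ pre c l 0 0 1,
    pre c l 0 0 1 ∧ npre c l 1 0 1 ∧ npre c l 1 1 0,
    pre c l 0 0 1 ∧ pre c l 1 1 0,
    pre c l 1 1 0 ∧ npre c l 0 0 1 ∧ npre c l 0 1 0,
    pre c l 0 1 0 ∧ pre c l 1 1 0,
    pre c l 0 1 0 ∧ npre c l 1 0 1 ∧ npre c l 1 1 0,
    pre c l 0 1 0 ∧ pre c l 1 0 1]

/-- The refined disjunction `D⁸`. -/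
def D8 (c l : Vec2) : Prop := ∃ k, br c l k

/-- The 0/1 code whose only `1` is in coordinate `(s, p)`; coordinate `(s, p)` stands for
the variable attached to "box `p` precedes the other box in direction `s`". -/
def uCode (s p : Fin 2) : Vec2 := fun s' p' => if s' = s ∧ p' = p then 1 else 0

/-- The codes of the encoding `C⁸` for the eight branches of `D⁸`. -/
def c8code : Fin 8 → Vec2 :=
  ![uCode 1 0, uCode 1 0 + uCode 0 0, uCode 0 0, uCode 0 0 + uCode 1 1,
    uCode 1 1, uCode 1 1 + uCode 0 1, uCode 0 1, uCode 0 1 + uCode 1 0]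

/-- `Q^lb`: stay-on-the-floor plus lower bounds on widths. -/
def Qlb (L : Fin 2 → ℝ) (lb : Fin 2 → Fin 2 → ℝ) (c l : Vec2) : Prop :=
  sitb L c l ∧ ∀ s k, lb s k ≤ l s k

/-- `Q^ub`: stay-on-the-floor plus lower and upper bounds on widths. -/
def Qub (L : Fin 2 → ℝ) (lb ub : Fin 2 → Fin 2 → ℝ) (c l : Vec2) : Prop :=
  sitb L c l ∧ ∀ s k, lb s k ≤ l s k ∧ l s k ≤ ub s k

/-- `Q^FLP`: stay-on-the-floor, width bounds, and area constraints. -/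
def QFLP (L : Fin 2 → ℝ) (lb ub : Fin 2 → Fin 2 → ℝ) (A : Fin 2 → ℝ) (c l : Vec2) : Prop :=
  Qub L lb ub c l ∧ ∀ k, A k ≤ l 0 k * l 1 k

/-- Embedding of `Q` with disjunction `D⁴` and the unary encoding `U⁴`. -/
def EmU4 (Q : Vec2 → Vec2 → Prop) (c l u : Vec2) : Prop :=
  ∃ s p : Fin 2, Q c l ∧ pre c l s p (1 - p) ∧ u = uCode s p

/-- Embedding of `Q` with disjunction `D⁸` and encoding `C⁸`. -/
def EmC8 (Q : Vec2 → Vec2 → Prop) (c l z : Vec2) : Prop :=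
  ∃ k : Fin 8, Q c l ∧ br c l k ∧ z = c8code k

/-- Embedding of `Q` with disjunction `D⁴` and the Gray encoding `GB⁴`. -/
def EmGB4 (Q : Vec2 → Vec2 → Prop) (c l : Vec2) (w : Fin 2 → ℝ) : Prop :=
  (Q c l ∧ pre c l 1 0 1 ∧ w = ![0, 0]) ∨
  (Q c l ∧ pre c l 0 0 1 ∧ w = ![1, 0]) ∨
  (Q c l ∧ pre c l 1 1 0 ∧ w = ![1, 1]) ∨
  (Q c l ∧ pre c l 0 1 0 ∧ w = ![0, 1])

/-- Dot product of two coefficient vectors indexed by `(s, k)`. -/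
def dotp (a x : Vec2) : ℝ := ∑ s, ∑ k, a s k * x s k

/-- The unary formulation (with binary `u`). -/
def Uform (L : Fin 2 → ℝ) (lb : Fin 2 → Fin 2 → ℝ) (c l u : Vec2) : Prop :=
  (∀ s p, u s p = 0 ∨ u s p = 1) ∧
  (∀ s p, l s p / 2 + lb s (1 - p) * u s (1 - p) ≤ c s p ∧
      c s p ≤ L s - l s p / 2 - lb s (1 - p) * u s p) ∧
  (∀ s p, c s p + l s p / 2 ≤ c s (1 - p) - l s (1 - p) / 2 + L s * (1 - u s p)) ∧
  (∀ s p, lb s p ≤ l s p) ∧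
  u 0 0 + u 0 1 + u 1 0 + u 1 1 = 1

/-- The refined unary formulation (with binary `z`). -/
def RUform (L : Fin 2 → ℝ) (lb : Fin 2 → Fin 2 → ℝ) (c l z : Vec2) : Prop :=
  (∀ s p, z s p = 0 ∨ z s p = 1) ∧
  (∀ s p, l s p / 2 + lb s (1 - p) * z s (1 - p) ≤ c s p ∧
      c s p ≤ L s - l s p / 2 - lb s (1 - p) * z s p) ∧
  (∀ s p, c s p + l s p / 2 ≤ c s (1 - p) - l s (1 - p) / 2 + L s * (1 - z s p)) ∧
  (∀ s p, lb s p ≤ l s p) ∧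
  (∀ s p, c s (1 - p) - l s (1 - p) / 2 + (lb s 0 + lb s 1) * (z s 0 + z s 1) ≤
      c s p + l s p / 2 + L s * z s p) ∧
  1 ≤ z 0 0 + z 0 1 + z 1 0 + z 1 1 ∧
  (∀ s, z s 0 + z s 1 ≤ 1)

/-- `Q^obj`: `Q^lb` augmented with the objective-linearization variables `dv`. -/
def Qobj (L : Fin 2 → ℝ) (lb : Fin 2 → Fin 2 → ℝ) (c l : Vec2) (dv : Fin 2 → ℝ) : Prop :=
  Qlb L lb c l ∧ ∀ s, c s 0 - c s 1 ≤ dv s ∧ c s 1 - c s 0 ≤ dv s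

/-- Embedding of `Q^obj` with disjunction `D⁸` and encoding `C⁸`. -/
def EmC8obj (L : Fin 2 → ℝ) (lb : Fin 2 → Fin 2 → ℝ) (c l : Vec2) (dv : Fin 2 → ℝ)
    (z : Vec2) : Prop :=
  ∃ k : Fin 8, Qobj L lb c l dv ∧ br c l k ∧ z = c8code k

/-- The affine map `𝒜^GB` translating Gray codes to `C⁸`-style codes. -/
def AGB (w : Fin 2 → ℝ) : Vec2 :=
  fun s p =>
    if s = 1 then (if p = 0 then 1 - w 0 - w 1 else w 0 + w 1 - 1)
    else (if p = 0 then w 0 - w 1 else -w 0 + w 1)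

/-- The unary formulation (with binary `u`) is exactly the embedding
`Em(Q^lb, D⁴, U⁴)`. -/
theorem unary_formulation_eq_embedding (L : Fin 2 → ℝ) (lb : Fin 2 → Fin 2 → ℝ)
    (hL : ∀ s, 0 < L s) (hlb : ∀ s k, 0 < lb s k) :
    ∀ c l u : Vec2, Uform L lb c l u ↔ EmU4 (Qlb L lb) c l u := by
  intro c l u
  have e1 : (1 - 0 : Fin 2) = 1 := by decide
  have e2 : (1 - 1 : Fin 2) = 0 := by decide
  constructor
  · rintro ⟨hbin, hbd, hbig, hlw, hsum⟩
    have hnn : ∀ s p, 0 ≤ u s p := by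
      intro s p; rcases hbin s p with h | h <;> rw [h] <;> norm_num
    have hQ : Qlb L lb c l := by
      refine ⟨fun s k => ?_, hlw⟩
      have h1 := (hbd s k).1
      have h2 := (hbd s k).2
      constructor <;>
        nlinarith [mul_nonneg (hlb s (1-k)).le (hnn s (1-k)),
          mul_nonneg (hlb s (1-k)).le (hnn s k)]
    rcases hbin 0 0 with h00 | h00 <;> rcases hbin 0 1 with h01 | h01 <;>
      rcases hbin 1 0 with h10 | h10 <;> rcases hbin 1 1 with h11 | h11 <;>
      first
      | (refine ⟨0, 0, hQ, ?_, ?_⟩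
         · have h := hbig 0 0; rw [h00, e1] at h; rw [e1]; unfold pre; linarith
         · funext s' p'; fin_cases s' <;> fin_cases p' <;>
             simp [uCode, h00, h01, h10, h11])
      | (refine ⟨0, 1, hQ, ?_, ?_⟩
         · have h := hbig 0 1; rw [h01, e2] at h; rw [e2]; unfold pre; linarith
         · funext s' p'; fin_cases s' <;> fin_cases p' <;>
             simp [uCode, h00, h01, h10, h11])
      | (refine ⟨1, 0, hQ, ?_, ?_⟩
         · have h := hbig 1 0; rw [h10, e1] at h; rw [e1]; unfold pre; linarith
         · funext s' p'; fin_cases s' <;> fin_cases p' <;>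
             simp [uCode, h00, h01, h10, h11])
      | (refine ⟨1, 1, hQ, ?_, ?_⟩
         · have h := hbig 1 1; rw [h11, e2] at h; rw [e2]; unfold pre; linarith
         · funext s' p'; fin_cases s' <;> fin_cases p' <;>
             simp [uCode, h00, h01, h10, h11])
      | (rw [h00, h01, h10, h11] at hsum; norm_num at hsum)
  · rintro ⟨s, p, ⟨hsitb, hlw⟩, hpre, rfl⟩
    have hsub : ∀ q : Fin 2, 1 - (1 - q) = q := by decide
    have hcase : ∀ q q' : Fin 2, q' = q ∨ q' = 1 - q := by decide
    have hne : ∀ q : Fin 2, (1 - q) ≠ q := by decide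
    have hu1 : uCode s p s p = 1 := by simp [uCode]
    have hu0 : ∀ s' p', ¬(s' = s ∧ p' = p) → uCode s p s' p' = 0 := by
      intro s' p' h; simp only [uCode, if_neg h]
    have hpre' : c s p + l s p / 2 ≤ c s (1 - p) - l s (1 - p) / 2 := hpre
    refine ⟨?_, ?_, ?_, hlw, ?_⟩
    · intro s' p'
      by_cases h : s' = s ∧ p' = p
      · right; rw [h.1, h.2, hu1]
      · left; exact hu0 _ _ h
    · intro s' p'
      by_cases hs : s' = s
      · subst hs
        rcases hcase p p' with h | h <;> rw [h]
        · rw [hu1, hu0 s' (1 - p) (fun hh => hne p hh.2)]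
          constructor
          · rw [mul_zero]; linarith [(hsitb s' p).1]
          · rw [mul_one]; linarith [(hsitb s' (1-p)).2, hlw s' (1-p)]
        · rw [hsub, hu1, hu0 s' (1 - p) (fun hh => hne p hh.2)]
          constructor
          · rw [mul_one]; linarith [(hsitb s' p).1, hlw s' p]
          · rw [mul_zero]; linarith [(hsitb s' (1-p)).2]
      · rw [hu0 s' p' (fun hh => hs hh.1), hu0 s' (1-p') (fun hh => hs hh.1),
          mul_zero]
        exact ⟨by linarith [(hsitb s' p').1], by linarith [(hsitb s' p').2]⟩
    · intro s' p'
      by_cases h : s' = s ∧ p' = p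
      · rcases h with ⟨hh1, hh2⟩
        rw [hh1, hh2, hu1]
        simp only [sub_self, mul_zero, add_zero]
        exact hpre'
      · rw [hu0 _ _ h]
        simp only [sub_zero, mul_one]
        linarith [(hsitb s' p').2, (hsitb s' (1-p')).1]
    · fin_cases s <;> fin_cases p <;> norm_num [uCode]
end

section
/- Suppose lb^s_i + lb^s_j < L^s for both s ∈ {x,y}. Let P be the polytope of points (c,ℓ,u) ∈ ℝ^8 × [0,1]^4 satisfying the linear relaxation of the unary formulation: for all s ∈ {x,y} and both orderings {p,q} = {i,j}: (1/2)ℓ^s_p + lb^s_q·u^s_{q,p} ≤ c^s_p ≤ L^s − (1/2)ℓ^s_p − lb^s_q·u^s_{p,q}; c^s_p + (1/2)ℓ^s_p ≤ c^s_q − (1/2)ℓ^s_q + L^s(1 − u^s_{p,q}); ℓ^s_p ≥ lb^s_p; u^x_{i,j} + u^x_{j,i} + u^y_{i,j} + u^y_{j,i} = 1; and 0 ≤ u^s_{p,q} ≤ 1. Then every extreme point of P has u ∈ {0,1}^4; that is, the unary formulation is ideal. -/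
/-!
Homogenize the constraints of one direction by a weight `t` (`UnaryRelax`). In gap coordinates,
the distances `c - ℓ/2` and `L t - c - ℓ/2` of a box to the two walls, the gap pair of box `p`
lies in a triangle of size `(L - lb p) t`, above the lower bounds `lb (1 - p) * u`, and the
boxes are coupled by `L u p ≤ (right gap of p) + (left gap of 1 - p)`. A triangle of size
`A + B + R` splits into triangles of sizes `A`, `B`, `R` so that the `A`-piece gets as much right
gap and the `B`-piece as much left gap as it can hold; with `A`, `B`, `R` proportional to
`u p`, `u (1 - p)` and the remaining weight, this greedy split keeps the coupling constraints.
Hence a point of one direction is a combination, with weights `u 0`, `u 1`, `1 - u 0 - u 1`, of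
points with `u = (1, 0)`, `(0, 1)`, `(0, 0)`. Doing this in both directions writes every point of
the polytope as a convex combination of its points with binary `u`, so those contain all
extreme points.
-/

theorem extremePoints_subset_of_subset_convexHull {𝕜 E : Type*} [Ring 𝕜] [LinearOrder 𝕜]
    [IsStrictOrderedRing 𝕜] [DenselyOrdered 𝕜] [AddCommGroup E] [Module 𝕜 E]
    [Module.IsTorsionFree 𝕜 E]
    {A S : Set E} (hA : Convex 𝕜 A) (hSA : S ⊆ A) (hAS : A ⊆ convexHull 𝕜 S) :
    A.extremePoints 𝕜 ⊆ S := by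
  rw [← (convexHull_min hSA hA).antisymm hAS]
  exact extremePoints_convexHull_subset

theorem le_min_add_min {m x y X Y : ℝ} (h₁ : m ≤ x + y) (h₂ : m ≤ x + Y) (h₃ : m ≤ X + y)
    (h₄ : m ≤ X + Y) : m ≤ min x X + min y Y := by
  rw [← min_add_add_right, ← min_add_add_left, ← min_add_add_left]
  exact le_min (le_min h₁ h₂) (le_min h₃ h₄)

def triangle (C : ℝ) : Set (ℝ × ℝ) := {v | 0 ≤ v.1 ∧ 0 ≤ v.2 ∧ v.1 + v.2 ≤ C}

theorem exists_triangle_split {v : ℝ × ℝ} {A B R : ℝ} (hA : 0 ≤ A) (hB : 0 ≤ B) (hR : 0 ≤ R)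
    (hv : v ∈ triangle (A + B + R)) :
    ∃ a ∈ triangle A, ∃ b ∈ triangle B, ∃ r ∈ triangle R,
      v = a + b + r ∧ min v.2 A ≤ a.2 ∧ min v.1 B ≤ b.1 := by
  obtain ⟨h₁, h₂, h₁₂⟩ := hv
  set a₂ := min v.2 A
  set b₁ := min v.1 B
  set a₁ := min (v.1 - b₁) (A - a₂)
  set b₂ := min (v.2 - a₂) (B - b₁)
  refine ⟨(a₁, a₂), ?_, (b₁, b₂), ?_, (v.1 - b₁ - a₁, v.2 - a₂ - b₂), ?_,
    by ext <;> simp only [Prod.fst_add, Prod.snd_add] <;> ring, le_rfl, le_rfl⟩ <;>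
  simp only [triangle, a₁, a₂, b₁, b₂, min_def] <;> split_ifs <;>
  refine ⟨?_, ?_, ?_⟩ <;> linarith

/-- Centres `x.1` and lengths `x.2` of the two boxes in one direction. -/
abbrev Layout := (Fin 2 → ℝ) × (Fin 2 → ℝ)

/-- One direction of the relaxation, homogenized by the weight `t` (the paper's constraints are
`t = 1`); `u p` is the variable `u_{p, 1-p}` of "box `p` precedes the other box". -/
def UnaryRelax (L : ℝ) (lb : Fin 2 → ℝ) (t : ℝ) (u : Fin 2 → ℝ) (x : Layout) : Prop :=
  (∀ p : Fin 2, x.2 p / 2 + lb (1 - p) * u (1 - p) ≤ x.1 p ∧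
      x.1 p ≤ L * t - x.2 p / 2 - lb (1 - p) * u p) ∧
    (∀ p : Fin 2, x.1 p + x.2 p / 2 ≤ x.1 (1 - p) - x.2 (1 - p) / 2 + L * (t - u p)) ∧
    ∀ p : Fin 2, lb p * t ≤ x.2 p

/-- The layout in `[0, L t]` in which box `p` has distances `g p = (left gap, right gap)` to the
two walls. -/
noncomputable def ofGaps (L t : ℝ) (g : Fin 2 → ℝ × ℝ) : Layout :=
  (fun p => ((g p).1 + L * t - (g p).2) / 2, fun p => L * t - (g p).1 - (g p).2)

noncomputable def gaps (L t : ℝ) (x : Layout) : Fin 2 → ℝ × ℝ :=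
  fun p => (x.1 p - x.2 p / 2, L * t - x.1 p - x.2 p / 2)

def GapRelax (L : ℝ) (lb : Fin 2 → ℝ) (t : ℝ) (u : Fin 2 → ℝ) (g : Fin 2 → ℝ × ℝ) : Prop :=
  ∀ p : Fin 2, lb (1 - p) * u (1 - p) ≤ (g p).1 ∧ lb (1 - p) * u p ≤ (g p).2 ∧
    L * u p ≤ (g p).2 + (g (1 - p)).1 ∧ (g p).1 + (g p).2 ≤ (L - lb p) * t

theorem ofGaps_add (L t t' : ℝ) (g g' : Fin 2 → ℝ × ℝ) :
    ofGaps L t g + ofGaps L t' g' = ofGaps L (t + t') (g + g') := by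
  ext p <;> simp only [ofGaps, Prod.fst_add, Prod.snd_add, Pi.add_apply] <;> ring

theorem ofGaps_gaps (L t : ℝ) (x : Layout) : ofGaps L t (gaps L t x) = x := by
  ext p <;> simp only [ofGaps, gaps] <;> ring

section OneDirection

variable {L : ℝ} {lb : Fin 2 → ℝ}

theorem unaryRelax_ofGaps_iff {t : ℝ} {u : Fin 2 → ℝ} {g : Fin 2 → ℝ × ℝ} :
    UnaryRelax L lb t u (ofGaps L t g) ↔ GapRelax L lb t u g := by
  simp only [UnaryRelax, GapRelax, ofGaps]
  constructor
  · rintro ⟨hAB, hC, hD⟩ p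
    refine ⟨?_, ?_, ?_, ?_⟩ <;> linarith [(hAB p).1, (hAB p).2, hC p, hD p]
  · intro h
    refine ⟨fun p => ⟨?_, ?_⟩, fun p => ?_, fun p => ?_⟩ <;> linarith [h p]

theorem UnaryRelax.add {t t' : ℝ} {u u' : Fin 2 → ℝ} {x x' : Layout} (h : UnaryRelax L lb t u x)
    (h' : UnaryRelax L lb t' u' x') : UnaryRelax L lb (t + t') (u + u') (x + x') := by
  obtain ⟨hAB, hC, hD⟩ := h
  obtain ⟨hAB', hC', hD'⟩ := h'
  refine ⟨fun p => ⟨?_, ?_⟩, fun p => ?_, fun p => ?_⟩ <;>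
    simp only [Prod.fst_add, Prod.snd_add, Pi.add_apply]
  · linarith [(hAB p).1, (hAB' p).1]
  · linarith [(hAB p).2, (hAB' p).2]
  · linarith [hC p, hC' p]
  · linarith [hD p, hD' p]

theorem UnaryRelax.smul {t a : ℝ} {u : Fin 2 → ℝ} {x : Layout} (h : UnaryRelax L lb t u x)
    (ha : 0 ≤ a) : UnaryRelax L lb (a * t) (a • u) (a • x) := by
  obtain ⟨hAB, hC, hD⟩ := h
  refine ⟨fun p => ⟨?_, ?_⟩, fun p => ?_, fun p => ?_⟩ <;>
    simp only [Prod.smul_fst, Prod.smul_snd, Pi.smul_apply, smul_eq_mul]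
  · linarith [mul_le_mul_of_nonneg_left (hAB p).1 ha]
  · linarith [mul_le_mul_of_nonneg_left (hAB p).2 ha]
  · linarith [mul_le_mul_of_nonneg_left (hC p) ha]
  · linarith [mul_le_mul_of_nonneg_left (hD p) ha]

theorem UnaryRelax.eq_zero_of_weight_zero {x : Layout} (h : UnaryRelax L lb 0 0 x) : x = 0 := by
  obtain ⟨hAB, -, hD⟩ := h
  simp only [Pi.zero_apply, mul_zero, zero_sub, sub_zero] at hAB hD
  ext p <;> simp only [Prod.fst_zero, Prod.snd_zero, Pi.zero_apply] <;>
    linarith [hD p, (hAB p).1, (hAB p).2]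

theorem UnaryRelax.exists_eq_smul {t : ℝ} {e : Fin 2 → ℝ} {x : Layout} (ht : 0 ≤ t)
    (h : UnaryRelax L lb t (t • e) x) (he : ∃ X, UnaryRelax L lb 1 e X) :
    ∃ X, UnaryRelax L lb 1 e X ∧ x = t • X := by
  rcases ht.eq_or_lt with rfl | ht
  · obtain ⟨X, hX⟩ := he
    rw [zero_smul] at h
    exact ⟨X, hX, by rw [zero_smul, h.eq_zero_of_weight_zero]⟩
  · refine ⟨t⁻¹ • x, ?_, by rw [smul_smul, mul_inv_cancel₀ ht.ne', one_smul]⟩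
    simpa [smul_smul, inv_mul_cancel₀ ht.ne'] using h.smul (inv_nonneg.2 ht.le)

theorem UnaryRelax.exists_single (hK : lb 0 + lb 1 ≤ L) (q : Fin 2) :
    ∃ X, UnaryRelax L lb 1 (Pi.single q 1) X := by
  refine ⟨(fun p => if p = q then lb p / 2 else L - lb p / 2, lb),
    fun p => ?_, fun p => ?_, fun p => ?_⟩ <;>
    fin_cases q <;> fin_cases p <;> simp <;> linarith

theorem UnaryRelax.exists_zero (hK : lb 0 + lb 1 ≤ L) (hlb : ∀ p, 0 ≤ lb p) :
    ∃ X, UnaryRelax L lb 1 0 X := by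
  refine ⟨(fun _ => L / 2, lb), fun p => ⟨?_, ?_⟩, fun p => ?_, fun p => ?_⟩ <;>
    fin_cases p <;> simp <;> linarith [hlb 0, hlb 1]

theorem GapRelax.exists_decomp (hK : lb 0 + lb 1 ≤ L) (hlb : ∀ p, 0 ≤ lb p) {r : ℝ}
    {u : Fin 2 → ℝ} {g : Fin 2 → ℝ × ℝ} (hu : ∀ p, 0 ≤ u p) (hr : 0 ≤ r)
    (h : GapRelax L lb (u 0 + u 1 + r) u g) :
    ∃ g₀ g₁ gᵣ : Fin 2 → ℝ × ℝ, GapRelax L lb (u 0) (u 0 • Pi.single 0 1) g₀ ∧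
      GapRelax L lb (u 1) (u 1 • Pi.single 1 1) g₁ ∧ GapRelax L lb r 0 gᵣ ∧
        g = g₀ + g₁ + gᵣ := by
  have hcap : ∀ p, lb (1 - p) ≤ L - lb p := fun p => by fin_cases p <;> simp <;> linarith
  have hsplit : ∀ p, ∃ a ∈ triangle ((L - lb p) * u p),
      ∃ b ∈ triangle ((L - lb p) * u (1 - p)), ∃ d ∈ triangle ((L - lb p) * r),
        g p = a + b + d ∧ min (g p).2 ((L - lb p) * u p) ≤ a.2 ∧
          min (g p).1 ((L - lb p) * u (1 - p)) ≤ b.1 := by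
    intro p
    have hL : 0 ≤ L - lb p := (hlb _).trans (hcap p)
    obtain ⟨h₁, h₂, -, h₄⟩ := h p
    refine exists_triangle_split (mul_nonneg hL (hu _)) (mul_nonneg hL (hu _))
      (mul_nonneg hL hr) ⟨(mul_nonneg (hlb _) (hu _)).trans h₁,
        (mul_nonneg (hlb _) (hu _)).trans h₂, ?_⟩
    fin_cases p <;> simp at h₄ ⊢ <;> linarith
  -- box `p` contributes `a p` when it comes first, `b p` when it comes second, `d p` otherwise
  choose a ha b hb d hd hg ha' hb' using hsplit
  have hA : ∀ q, lb (1 - q) * u q ≤ (a q).2 := fun q =>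
    (le_min (h q).2.1 (mul_le_mul_of_nonneg_right (hcap q) (hu q))).trans (ha' q)
  have hB : ∀ p, lb (1 - p) * u (1 - p) ≤ (b p).1 := fun p =>
    (le_min (h p).1 (mul_le_mul_of_nonneg_right (hcap p) (hu _))).trans (hb' p)
  have hAB : ∀ q, L * u q ≤ (a q).2 + (b (1 - q)).1 := fun q => by
    have h₁ := (h (1 - q)).1
    have h₂ := hb' (1 - q)
    rw [sub_sub_cancel] at h₁ h₂
    refine (le_min_add_min (h q).2.2.1 ?_ ?_ ?_).trans (add_le_add (ha' q) h₂)
    · linarith [(h q).2.1]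
    · linarith
    · nlinarith [hcap q, hu q]
  refine ⟨fun p => if p = 0 then a p else b p, fun p => if p = 1 then a p else b p, d,
    fun p => ?_, fun p => ?_, fun p => ?_, ?_⟩
  · fin_cases p <;> simp
    · exact ⟨(ha 0).1, hA 0, hAB 0, (ha 0).2.2⟩
    · exact ⟨hB 1, (hb 1).2.1, add_nonneg (hb 1).2.1 (ha 0).1, (hb 1).2.2⟩
  · fin_cases p <;> simp
    · exact ⟨hB 0, (hb 0).2.1, add_nonneg (hb 0).2.1 (ha 1).1, (hb 0).2.2⟩
    · exact ⟨(ha 1).1, hA 1, hAB 1, (ha 1).2.2⟩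
  · obtain ⟨h₁, h₂, h₃⟩ := hd p
    simp only [Pi.zero_apply, mul_zero]
    exact ⟨h₁, h₂, add_nonneg h₂ (hd _).1, h₃⟩
  · funext p
    fin_cases p <;> simp [hg, add_comm]

theorem UnaryRelax.exists_convex_decomp (hK : lb 0 + lb 1 ≤ L) (hlb : ∀ p, 0 ≤ lb p)
    {u : Fin 2 → ℝ} {x : Layout} (hu : ∀ p, 0 ≤ u p) (hu₁ : u 0 + u 1 ≤ 1)
    (h : UnaryRelax L lb 1 u x) :
    ∃ D : Fin 2 → Layout, ∃ Z : Layout, (∀ q, UnaryRelax L lb 1 (Pi.single q 1) (D q)) ∧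
      UnaryRelax L lb 1 0 Z ∧ x = ∑ q, u q • D q + (1 - ∑ q, u q) • Z := by
  set r := 1 - u 0 - u 1
  have ht : u 0 + u 1 + r = 1 := by ring
  have hg : GapRelax L lb (u 0 + u 1 + r) u (gaps L 1 x) := by
    rwa [← unaryRelax_ofGaps_iff, ht, ofGaps_gaps]
  obtain ⟨g₀, g₁, gᵣ, h₀, h₁, hᵣ, hsum⟩ := hg.exists_decomp hK hlb hu (by linarith)
  obtain ⟨X, hX, hX'⟩ :=
    exists_eq_smul (hu 0) (unaryRelax_ofGaps_iff.2 h₀) (exists_single hK 0)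
  obtain ⟨Y, hY, hY'⟩ :=
    exists_eq_smul (hu 1) (unaryRelax_ofGaps_iff.2 h₁) (exists_single hK 1)
  obtain ⟨Z, hZ, hZ'⟩ := exists_eq_smul (by linarith : 0 ≤ r)
    (by rw [smul_zero]; exact unaryRelax_ofGaps_iff.2 hᵣ) (exists_zero hK hlb)
  refine ⟨![X, Y], Z, fun q => by fin_cases q <;> assumption, hZ, ?_⟩
  calc x = ofGaps L (u 0 + u 1 + r) (g₀ + g₁ + gᵣ) := by rw [ht, ← hsum, ofGaps_gaps]
    _ = u 0 • X + u 1 • Y + r • Z := by rw [← ofGaps_add, ← ofGaps_add, hX', hY', hZ']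
    _ = ∑ q, u q • ![X, Y] q + (1 - ∑ q, u q) • Z := by simp [Fin.sum_univ_two, r, sub_sub]

end OneDirection

def unaryPolytope (L : Fin 2 → ℝ) (lb : Fin 2 → Fin 2 → ℝ) : Set (Vec2 × Vec2 × Vec2) :=
  {y | (∀ s, UnaryRelax (L s) (lb s) 1 (y.2.2 s) (y.1 s, y.2.1 s)) ∧
    y.2.2 0 0 + y.2.2 0 1 + y.2.2 1 0 + y.2.2 1 1 = 1 ∧ ∀ s p, 0 ≤ y.2.2 s p ∧ y.2.2 s p ≤ 1}

theorem setOf_eq_unaryPolytope (L : Fin 2 → ℝ) (lb : Fin 2 → Fin 2 → ℝ) :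
    {y : Vec2 × Vec2 × Vec2 |
        (∀ s p : Fin 2, y.2.1 s p / 2 + lb s (1 - p) * y.2.2 s (1 - p) ≤ y.1 s p ∧
          y.1 s p ≤ L s - y.2.1 s p / 2 - lb s (1 - p) * y.2.2 s p) ∧
        (∀ s p : Fin 2, y.1 s p + y.2.1 s p / 2 ≤
          y.1 s (1 - p) - y.2.1 s (1 - p) / 2 + L s * (1 - y.2.2 s p)) ∧
        (∀ s p : Fin 2, lb s p ≤ y.2.1 s p) ∧
        y.2.2 0 0 + y.2.2 0 1 + y.2.2 1 0 + y.2.2 1 1 = 1 ∧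
        (∀ s p : Fin 2, 0 ≤ y.2.2 s p ∧ y.2.2 s p ≤ 1)} = unaryPolytope L lb := by
  ext y
  simp only [unaryPolytope, UnaryRelax, Set.mem_ofPred_eq, mul_one, forall_and, and_assoc]

theorem convex_unaryPolytope (L : Fin 2 → ℝ) (lb : Fin 2 → Fin 2 → ℝ) :
    Convex ℝ (unaryPolytope L lb) := by
  intro y hy z hz a b ha hb hab
  refine ⟨fun s => ?_, ?_, fun s p => ?_⟩
  · have := ((hy.1 s).smul ha).add ((hz.1 s).smul hb)
    rwa [mul_one, mul_one, hab] at this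
  · simp only [Prod.snd_add, Prod.smul_snd, Pi.add_apply, Pi.smul_apply, smul_eq_mul]
    linear_combination a * hy.2.1 + b * hz.2.1 + hab
  · simp only [Prod.snd_add, Prod.smul_snd, Pi.add_apply, Pi.smul_apply, smul_eq_mul]
    obtain ⟨hy₀, hy₁⟩ := hy.2.2 s p
    obtain ⟨hz₀, hz₁⟩ := hz.2.2 s p
    constructor <;> nlinarith

theorem update_mem_unaryPolytope {L : Fin 2 → ℝ} {lb : Fin 2 → Fin 2 → ℝ} {s p : Fin 2}
    {X : Layout} {Z : Fin 2 → Layout} (hX : UnaryRelax (L s) (lb s) 1 (Pi.single p 1) X)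
    (hZ : ∀ s', UnaryRelax (L s') (lb s') 1 0 (Z s')) :
    ((fun s' => (Function.update Z s X s').1, fun s' => (Function.update Z s X s').2,
      Pi.single s (Pi.single p 1)) : Vec2 × Vec2 × Vec2) ∈
      {y ∈ unaryPolytope L lb | ∀ s p, y.2.2 s p = 0 ∨ y.2.2 s p = 1} := by
  have hbin : ∀ s' q, (Pi.single s (Pi.single p 1) : Vec2) s' q = 0 ∨
      (Pi.single s (Pi.single p 1) : Vec2) s' q = 1 := fun s' q => by
    rcases eq_or_ne s' s with rfl | hs <;> rcases eq_or_ne q p with rfl | hq <;> simp [*]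
  refine ⟨⟨fun s' => ?_, ?_, fun s' q => ?_⟩, hbin⟩
  · rcases eq_or_ne s' s with rfl | hs
    · simpa using hX
    · simpa [hs, Pi.single_eq_of_ne hs] using hZ s'
  · fin_cases s <;> fin_cases p <;> simp
  · rcases hbin s' q with h | h <;> simp only [h] <;> norm_num

theorem unaryPolytope_subset_convexHull {L : Fin 2 → ℝ} {lb : Fin 2 → Fin 2 → ℝ}
    (hK : ∀ s, lb s 0 + lb s 1 ≤ L s) (hlb : ∀ s p, 0 ≤ lb s p) :
    unaryPolytope L lb ⊆
      convexHull ℝ {y ∈ unaryPolytope L lb | ∀ s p, y.2.2 s p = 0 ∨ y.2.2 s p = 1} := by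
  rintro y ⟨hy, hsum, hbd⟩
  have hu₁ : ∀ s, y.2.2 s 0 + y.2.2 s 1 ≤ 1 := fun s => by
    fin_cases s <;> simp <;> linarith [(hbd 0 0).1, (hbd 0 1).1, (hbd 1 0).1, (hbd 1 1).1]
  choose D Z hD hZ hdec using fun s =>
    (hy s).exists_convex_decomp (hK s) (hlb s) (fun p => (hbd s p).1) (hu₁ s)
  let z : Fin 2 × Fin 2 → Vec2 × Vec2 × Vec2 := fun i =>
    (fun s => (Function.update Z i.1 (D i.1 i.2) s).1,
      fun s => (Function.update Z i.1 (D i.1 i.2) s).2, Pi.single i.1 (Pi.single i.2 1))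
  have hpair : ∀ s, ∑ i : Fin 2 × Fin 2, y.2.2 i.1 i.2 • Function.update Z i.1 (D i.1 i.2) s =
      (y.1 s, y.2.1 s) := by
    intro s
    rw [hdec s]
    fin_cases s <;> simp [Fintype.sum_prod_type, Fin.sum_univ_two]
    · linear_combination (norm := module) hsum • Z 0
    · linear_combination (norm := module) hsum • Z 1
  refine mem_convexHull_of_exists_fintype (fun i => y.2.2 i.1 i.2) z (fun i => (hbd _ _).1) ?_
    (fun i => update_mem_unaryPolytope (hD i.1 i.2) hZ) ?_
  · simp only [Fintype.sum_prod_type, Fin.sum_univ_two]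
    linarith
  · ext s q
    · simpa [z, Finset.sum_apply, Prod.fst_sum] using congrArg (fun x => x.1 q) (hpair s)
    · simpa [z, Finset.sum_apply, Prod.fst_sum, Prod.snd_sum] using
        congrArg (fun x => x.2 q) (hpair s)
    · fin_cases s <;> fin_cases q <;> simp [Fintype.sum_prod_type, Fin.sum_univ_two, z]

theorem unary_formulation_ideal_general (L : Fin 2 → ℝ) (lb : Fin 2 → Fin 2 → ℝ)
    (hlb : ∀ s k, 0 < lb s k)
    (hstrict : ∀ s : Fin 2, lb s 0 + lb s 1 < L s) :
    ∀ x ∈ Set.extremePoints ℝ {y : Vec2 × Vec2 × Vec2 |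
        (∀ s p : Fin 2, y.2.1 s p / 2 + lb s (1 - p) * y.2.2 s (1 - p) ≤ y.1 s p ∧
          y.1 s p ≤ L s - y.2.1 s p / 2 - lb s (1 - p) * y.2.2 s p) ∧
        (∀ s p : Fin 2, y.1 s p + y.2.1 s p / 2 ≤
          y.1 s (1 - p) - y.2.1 s (1 - p) / 2 + L s * (1 - y.2.2 s p)) ∧
        (∀ s p : Fin 2, lb s p ≤ y.2.1 s p) ∧
        y.2.2 0 0 + y.2.2 0 1 + y.2.2 1 0 + y.2.2 1 1 = 1 ∧
        (∀ s p : Fin 2, 0 ≤ y.2.2 s p ∧ y.2.2 s p ≤ 1)},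
      ∀ s p : Fin 2, x.2.2 s p = 0 ∨ x.2.2 s p = 1 := by
  rw [setOf_eq_unaryPolytope]
  intro x hx
  exact (extremePoints_subset_of_subset_convexHull (convex_unaryPolytope L lb)
    (Set.sep_subset _ _)
    (unaryPolytope_subset_convexHull (fun s => (hstrict s).le) (fun s p => (hlb s p).le)) hx).2

/-- If `lb^s_i + lb^s_j < L^s` for both directions, every extreme point of
the LP relaxation of the unary formulation has binary `u`; i.e. the unary formulation is
ideal. -/
theorem unary_formulation_ideal (L : Fin 2 → ℝ) (lb : Fin 2 → Fin 2 → ℝ)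
    (hL : ∀ s, 0 < L s) (hlb : ∀ s k, 0 < lb s k)
    (hstrict : ∀ s : Fin 2, lb s 0 + lb s 1 < L s) :
    ∀ x ∈ Set.extremePoints ℝ {y : Vec2 × Vec2 × Vec2 |
        (∀ s p : Fin 2, y.2.1 s p / 2 + lb s (1 - p) * y.2.2 s (1 - p) ≤ y.1 s p ∧
          y.1 s p ≤ L s - y.2.1 s p / 2 - lb s (1 - p) * y.2.2 s p) ∧
        (∀ s p : Fin 2, y.1 s p + y.2.1 s p / 2 ≤
          y.1 s (1 - p) - y.2.1 s (1 - p) / 2 + L s * (1 - y.2.2 s p)) ∧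
        (∀ s p : Fin 2, lb s p ≤ y.2.1 s p) ∧
        y.2.2 0 0 + y.2.2 0 1 + y.2.2 1 0 + y.2.2 1 1 = 1 ∧
        (∀ s p : Fin 2, 0 ≤ y.2.2 s p ∧ y.2.2 s p ≤ 1)},
      ∀ s p : Fin 2, x.2.2 s p = 0 ∨ x.2.2 s p = 1 :=
  unary_formulation_ideal_general L lb hlb hstrict
end

section
/- The set of points (c,ℓ,w) ∈ ℝ^8 × {0,1}^2 satisfying: the stay-on-the-floor constraints; ℓ^s_k ≥ lb^s_k for all s ∈ {x,y}, k ∈ {i,j}; c^y_i + (1/2)ℓ^y_i ≤ c^y_j − (1/2)ℓ^y_j + L^y(w_1 + w_2); c^x_i + (1/2)ℓ^x_i ≤ c^x_j − (1/2)ℓ^x_j + L^x(1 − w_1 + w_2); c^y_j + (1/2)ℓ^y_j ≤ c^y_i − (1/2)ℓ^y_i + L^y(2 − w_1 − w_2); and c^x_j + (1/2)ℓ^x_j ≤ c^x_i − (1/2)ℓ^x_i + L^x(1 + w_1 − w_2), is exactly equal to the embedding Em(Q^lb, D^4, GB^4), i.e., the union of {(c,ℓ) ∈ Q^lb : d^1}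 × {(0,0)}, {(c,ℓ) ∈ Q^lb : d^2} × {(1,0)}, {(c,ℓ) ∈ Q^lb : d^3} × {(1,1)}, and {(c,ℓ) ∈ Q^lb : d^4} × {(0,1)}. -/
/-- The big-M Gray-code formulation (with binary `w ∈ {0,1}²`) is exactly
the embedding `Em(Q^lb, D⁴, GB⁴)`. -/
theorem gray_formulation_eq_embedding (L : Fin 2 → ℝ) (lb : Fin 2 → Fin 2 → ℝ)
    (hL : ∀ s, 0 < L s) (hlb : ∀ s k, 0 < lb s k) :
    ∀ (c l : Vec2) (w : Fin 2 → ℝ),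
      ((∀ t, w t = 0 ∨ w t = 1) ∧ sitb L c l ∧ (∀ s k, lb s k ≤ l s k) ∧
        c 1 0 + l 1 0 / 2 ≤ c 1 1 - l 1 1 / 2 + L 1 * (w 0 + w 1) ∧
        c 0 0 + l 0 0 / 2 ≤ c 0 1 - l 0 1 / 2 + L 0 * (1 - w 0 + w 1) ∧
        c 1 1 + l 1 1 / 2 ≤ c 1 0 - l 1 0 / 2 + L 1 * (2 - w 0 - w 1) ∧
        c 0 1 + l 0 1 / 2 ≤ c 0 0 - l 0 0 / 2 + L 0 * (1 + w 0 - w 1)) ↔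
      EmGB4 (Qlb L lb) c l w := by
  
  intro c l w
  have ew : w = ![w 0, w 1] := by funext t; fin_cases t <;> rfl
  constructor
  · rintro ⟨hw, hs, hl, h1, h2, h3, h4⟩
    rcases hw 0 with h0|h0 <;> rcases hw 1 with k1|k1
    · exact Or.inl ⟨⟨hs, hl⟩, by unfold pre; rw [h0, k1] at h1; linarith,
        by rw [ew, h0, k1]⟩
    · exact Or.inr (Or.inr (Or.inr ⟨⟨hs, hl⟩, by unfold pre; rw [h0, k1] at h4; linarith,
        by rw [ew, h0, k1]⟩))
    · exact Or.inr (Or.inl ⟨⟨hs, hl⟩, by unfold pre; rw [h0, k1] at h2; linarith,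
        by rw [ew, h0, k1]⟩)
    · exact Or.inr (Or.inr (Or.inl ⟨⟨hs, hl⟩, by unfold pre; rw [h0, k1] at h3; linarith,
        by rw [ew, h0, k1]⟩))
  · rintro (⟨⟨hs, hl⟩, hp, rfl⟩|⟨⟨hs, hl⟩, hp, rfl⟩|⟨⟨hs, hl⟩, hp, rfl⟩|⟨⟨hs, hl⟩, hp, rfl⟩) <;>
    · unfold pre at hp
      have s00 := hs 0 0; have s01 := hs 0 1; have s10 := hs 1 0; have s11 := hs 1 1
      have hL0 := hL 0; have hL1 := hL 1
      refine ⟨by intro t; fin_cases t <;> simp, hs, hl, ?_, ?_, ?_, ?_⟩ <;>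
        simp only [Matrix.cons_val_zero, Matrix.cons_val_one, Matrix.head_cons] <;>
        · obtain ⟨a1, a2⟩ := s00; obtain ⟨b1, b2⟩ := s01
          obtain ⟨d1, d2⟩ := s10; obtain ⟨e1, e2⟩ := s11
          norm_num
          linarith
end

section
/- For every pairwise layout (c,ℓ) ∈ ℝ^8, the disjunction D^4 holds if and only if the refined disjunction D^8 holds; that is, D^8 is a logically equivalent refinement of D^4. -/
/-- The refined disjunction `D⁸` is logically equivalent to `D⁴`. -/
theorem refined_disjunction_equiv : ∀ c l : Vec2, D4 c l ↔ D8 c l := by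
  intro c l
  constructor
  · rintro (h | h | h | h)
    · rcases le_total (c 0 0 + l 0 0 / 2) (c 0 1 - l 0 1 / 2) with h1 | h1
      · exact ⟨1, h, h1⟩
      rcases le_total (c 0 1 + l 0 1 / 2) (c 0 0 - l 0 0 / 2) with h2 | h2
      · exact ⟨7, h2, h⟩
      · exact ⟨0, h, h1, h2⟩
    · rcases le_total (c 1 0 + l 1 0 / 2) (c 1 1 - l 1 1 / 2) with h1 | h1
      · exact ⟨1, h1, h⟩
      rcases le_total (c 1 1 + l 1 1 / 2) (c 1 0 - l 1 0 / 2) with h2 | h2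
      · exact ⟨3, h, h2⟩
      · exact ⟨2, h, h1, h2⟩
    · rcases le_total (c 0 0 + l 0 0 / 2) (c 0 1 - l 0 1 / 2) with h1 | h1
      · exact ⟨3, h1, h⟩
      rcases le_total (c 0 1 + l 0 1 / 2) (c 0 0 - l 0 0 / 2) with h2 | h2
      · exact ⟨5, h2, h⟩
      · exact ⟨4, h, h1, h2⟩
    · rcases le_total (c 1 0 + l 1 0 / 2) (c 1 1 - l 1 1 / 2) with h1 | h1
      · exact ⟨7, h, h1⟩
      rcases le_total (c 1 1 + l 1 1 / 2) (c 1 0 - l 1 0 / 2) with h2 | h2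
      · exact ⟨5, h, h2⟩
      · exact ⟨6, h, h1, h2⟩
  · rintro ⟨k, hk⟩
    fin_cases k
    · exact Or.inl hk.1
    · exact Or.inl hk.1
    · exact Or.inr (Or.inl hk.1)
    · exact Or.inr (Or.inl hk.1)
    · exact Or.inr (Or.inr (Or.inl hk.1))
    · exact Or.inr (Or.inr (Or.inr hk.1))
    · exact Or.inr (Or.inr (Or.inr hk.1))
    · exact Or.inr (Or.inr (Or.inr hk.1))
end

section
/- The set of points (c,ℓ,z) ∈ ℝ^8 × {0,1}^4 satisfying the refined unary formulation — namely, for all s ∈ {x,y} and both orderings {p,q} = {i,j}: (1/2)ℓ^s_p + lb^s_q·z^s_{q,p} ≤ c^s_p ≤ L^s − (1/2)ℓ^s_p − lb^s_q·z^s_{p,q}; c^s_p + (1/2)ℓ^s_p ≤ c^s_q − (1/2)ℓ^s_q + L^s(1 − z^s_{p,q}); ℓ^s_p ≥ lb^s_p; c^s_p + (1/2)ℓ^s_p + L^s·z^s_{p,q} ≥ c^s_q − (1/2)ℓ^s_q + (lb^s_p + lb^s_q)(z^s_{i,j} + z^s_{j,i}); together with z^x_{i,j} + z^x_{j,i} +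 z^y_{i,j} + z^y_{j,i} ≥ 1 and z^s_{i,j} + z^s_{j,i} ≤ 1 for s ∈ {x,y} — is exactly equal to the embedding Em(Q^lb, D^8, C^8), i.e., the union over k = 1, …, 8 of {(c,ℓ) ∈ Q^lb : br^k} × {h^k} where h^k is the code assigned to br^k by C^8. -/
section AuxRUF

variable (L : Fin 2 → ℝ) (lb : Fin 2 → Fin 2 → ℝ)

private lemma fin2_eq (p : Fin 2) : p = 0 ∨ p = 1 := by omega

private lemma fin2_sub_sub (p : Fin 2) : 1 - (1 - p) = p := by fin_cases p <;> rfl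

private lemma ruform_back (hL : ∀ s, 0 < L s) (hlb : ∀ s k, 0 < lb s k) (c l z : Vec2)
    (hQ : Qlb L lb c l)
    (hz01 : ∀ s p, z s p = 0 ∨ z s p = 1)
    (hle : ∀ s, z s 0 + z s 1 ≤ 1)
    (hsum : 1 ≤ z 0 0 + z 0 1 + z 1 0 + z 1 1)
    (hp : ∀ s p, z s p = 1 → pre c l s p (1 - p))
    (hn : ∀ s, z s 0 = 0 → z s 1 = 0 → npre c l s 0 1 ∧ npre c l s 1 0) :
    RUform L lb c l z := by
  obtain ⟨hsitb, hlbl⟩ := hQ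
  have hp' : ∀ s p, z s p = 1 →
      c s p + l s p / 2 ≤ c s (1 - p) - l s (1 - p) / 2 := fun s p h => hp s p h
  refine ⟨hz01, ?_, ?_, hlbl, ?_, hsum, hle⟩
  · intro s p
    have A := hsitb s p
    have B := hsitb s (1 - p)
    have Lq := hlbl s (1 - p)
    constructor
    · rcases hz01 s (1 - p) with h | h
      · rw [h]; linarith [A.1]
      · have h2 := hp' s (1 - p) h
        rw [fin2_sub_sub] at h2
        rw [h]; linarith [B.1]
    · rcases hz01 s p with h | h
      · rw [h]; linarith [A.2]
      · have h2 := hp' s p h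
        rw [h]; linarith [B.2]
  · intro s p
    have A := hsitb s p
    have B := hsitb s (1 - p)
    rcases hz01 s p with h | h
    · rw [h]; linarith [A.2, B.1]
    · have h2 := hp' s p h
      rw [h]; linarith
  · intro s p
    rcases fin2_eq p with rfl | rfl
    all_goals simp only [Fin.isValue, show (1 : Fin 2) - 0 = 1 from rfl,
      show (1 : Fin 2) - 1 = 0 from rfl]
    · -- p = 0 : c s 1 - l s 1 / 2 + (lb s 0 + lb s 1) * (z s 0 + z s 1)
      --         ≤ c s 0 + l s 0 / 2 + L s * z s 0
      rcases hz01 s 0 with h0 | h0 <;> rcases hz01 s 1 with h1 | h1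
      · have hn0 := (hn s h0 h1).1
        simp only [npre] at hn0
        rw [h0, h1]; linarith
      · have h2 := hp' s 1 h1
        simp only [show (1 : Fin 2) - 1 = 0 from rfl] at h2
        rw [h0, h1]
        linarith [hlbl s 0, hlbl s 1]
      · have h2 := hp' s 0 h0
        simp only [show (1 : Fin 2) - 0 = 1 from rfl] at h2
        rw [h0, h1]
        linarith [(hsitb s 1).2, (hsitb s 0).1, hlbl s 0, hlbl s 1]
      · exfalso; have := hle s; rw [h0, h1] at this; linarith
    · rcases hz01 s 0 with h0 | h0 <;> rcases hz01 s 1 with h1 | h1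
      · have hn1 := (hn s h0 h1).2
        simp only [npre] at hn1
        rw [h0, h1]; linarith
      · have h2 := hp' s 1 h1
        simp only [show (1 : Fin 2) - 1 = 0 from rfl] at h2
        rw [h0, h1]
        linarith [(hsitb s 0).2, (hsitb s 1).1, hlbl s 0, hlbl s 1]
      · have h2 := hp' s 0 h0
        simp only [show (1 : Fin 2) - 0 = 1 from rfl] at h2
        rw [h0, h1]
        linarith [hlbl s 0, hlbl s 1]
      · exfalso; have := hle s; rw [h0, h1] at this; linarith

private lemma fin8_eq (k : Fin 8) :
    k = 0 ∨ k = 1 ∨ k = 2 ∨ k = 3 ∨ k = 4 ∨ k = 5 ∨ k = 6 ∨ k = 7 := by omega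

private lemma e10 : (1 : Fin 2) - 0 = 1 := rfl
private lemma e11 : (1 : Fin 2) - 1 = 0 := rfl

private lemma back_single (hL : ∀ s, 0 < L s) (hlb : ∀ s k, 0 < lb s k) (c l : Vec2)
    (hQ : Qlb L lb c l) (s p : Fin 2)
    (h1 : pre c l s p (1 - p)) (h2 : npre c l (1 - s) 0 1) (h3 : npre c l (1 - s) 1 0) :
    RUform L lb c l (uCode s p) := by
  apply ruform_back L lb hL hlb c l _ hQ
  · intro a b
    rcases fin2_eq a with rfl | rfl <;> rcases fin2_eq b with rfl | rfl <;>
      rcases fin2_eq s with rfl | rfl <;> rcases fin2_eq p with rfl | rfl <;>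
      norm_num [uCode]
  · intro a
    rcases fin2_eq a with rfl | rfl <;>
      rcases fin2_eq s with rfl | rfl <;> rcases fin2_eq p with rfl | rfl <;>
      norm_num [uCode]
  · rcases fin2_eq s with rfl | rfl <;> rcases fin2_eq p with rfl | rfl <;>
      norm_num [uCode]
  · intro a b hab
    rcases fin2_eq a with rfl | rfl <;> rcases fin2_eq b with rfl | rfl <;>
      rcases fin2_eq s with rfl | rfl <;> rcases fin2_eq p with rfl | rfl <;>
      simp only [e10, e11] at h1 h2 h3 ⊢ <;>
      simp [uCode] at hab <;>
      exact h1
  · intro a ha0 ha1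
    rcases fin2_eq a with rfl | rfl <;>
      rcases fin2_eq s with rfl | rfl <;> rcases fin2_eq p with rfl | rfl <;>
      simp only [e10, e11] at h1 h2 h3 ⊢ <;>
      simp [uCode] at ha0 ha1 <;>
      exact ⟨h2, h3⟩

private lemma back_double (hL : ∀ s, 0 < L s) (hlb : ∀ s k, 0 < lb s k) (c l : Vec2)
    (hQ : Qlb L lb c l) (p q : Fin 2)
    (h0 : pre c l 0 p (1 - p)) (h1 : pre c l 1 q (1 - q)) :
    RUform L lb c l (uCode 0 p + uCode 1 q) := by
  apply ruform_back L lb hL hlb c l _ hQ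
  · intro a b
    rcases fin2_eq a with rfl | rfl <;> rcases fin2_eq b with rfl | rfl <;>
      rcases fin2_eq p with rfl | rfl <;> rcases fin2_eq q with rfl | rfl <;>
      norm_num [uCode]
  · intro a
    rcases fin2_eq a with rfl | rfl <;>
      rcases fin2_eq p with rfl | rfl <;> rcases fin2_eq q with rfl | rfl <;>
      norm_num [uCode]
  · rcases fin2_eq p with rfl | rfl <;> rcases fin2_eq q with rfl | rfl <;>
      norm_num [uCode]
  · intro a b hab
    rcases fin2_eq a with rfl | rfl <;> rcases fin2_eq b with rfl | rfl <;>
      rcases fin2_eq p with rfl | rfl <;> rcases fin2_eq q with rfl | rfl <;>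
      simp only [e10, e11] at h0 h1 ⊢ <;>
      simp [uCode] at hab <;>
      first | exact h0 | exact h1
  · intro a ha0 ha1
    rcases fin2_eq a with rfl | rfl <;>
      rcases fin2_eq p with rfl | rfl <;> rcases fin2_eq q with rfl | rfl <;>
      simp [uCode] at ha0 ha1

private lemma cc0 : c8code 0 = uCode 1 0 := rfl
private lemma cc1 : c8code 1 = uCode 0 0 + uCode 1 0 := by
  rw [show c8code 1 = uCode 1 0 + uCode 0 0 from rfl, add_comm]
private lemma cc2 : c8code 2 = uCode 0 0 := rfl
private lemma cc3 : c8code 3 = uCode 0 0 + uCode 1 1 := rfl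
private lemma cc4 : c8code 4 = uCode 1 1 := rfl
private lemma cc5 : c8code 5 = uCode 0 1 + uCode 1 1 := by
  rw [show c8code 5 = uCode 1 1 + uCode 0 1 from rfl, add_comm]
private lemma cc6 : c8code 6 = uCode 0 1 := rfl
private lemma cc7 : c8code 7 = uCode 0 1 + uCode 1 0 := rfl

private lemma bb (c l : Vec2) :
    (br c l 0 = (pre c l 1 0 1 ∧ npre c l 0 0 1 ∧ npre c l 0 1 0)) ∧
    (br c l 1 = (pre c l 1 0 1 ∧ pre c l 0 0 1)) ∧
    (br c l 2 = (pre c l 0 0 1 ∧ npre c l 1 0 1 ∧ npre c l 1 1 0)) ∧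
    (br c l 3 = (pre c l 0 0 1 ∧ pre c l 1 1 0)) ∧
    (br c l 4 = (pre c l 1 1 0 ∧ npre c l 0 0 1 ∧ npre c l 0 1 0)) ∧
    (br c l 5 = (pre c l 0 1 0 ∧ pre c l 1 1 0)) ∧
    (br c l 6 = (pre c l 0 1 0 ∧ npre c l 1 0 1 ∧ npre c l 1 1 0)) ∧
    (br c l 7 = (pre c l 0 1 0 ∧ pre c l 1 0 1)) :=
  ⟨rfl, rfl, rfl, rfl, rfl, rfl, rfl, rfl⟩

end AuxRUF

/-- The refined unary formulation (with binary `z`) is exactly the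
embedding `Em(Q^lb, D⁸, C⁸)`. -/
theorem refined_unary_formulation_eq_embedding (L : Fin 2 → ℝ) (lb : Fin 2 → Fin 2 → ℝ)
    (hL : ∀ s, 0 < L s) (hlb : ∀ s k, 0 < lb s k) :
    ∀ c l z : Vec2, RUform L lb c l z ↔ EmC8 (Qlb L lb) c l z := by
  intro c l z
  constructor
  · rintro ⟨hz, hbd, hpre, hlbl, h5, hsum, hsle⟩
    have hznn : ∀ s p, (0:ℝ) ≤ z s p := by
      intro s p; rcases hz s p with h | h <;> rw [h] <;> norm_num
    have hQ : Qlb L lb c l := by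
      refine ⟨fun s p => ?_, hlbl⟩
      have h1 := (hbd s p).1
      have h2 := (hbd s p).2
      have n1 : (0:ℝ) ≤ lb s (1 - p) * z s (1 - p) :=
        mul_nonneg (hlb s (1 - p)).le (hznn s (1 - p))
      have n2 : (0:ℝ) ≤ lb s (1 - p) * z s p :=
        mul_nonneg (hlb s (1 - p)).le (hznn s p)
      constructor <;> linarith
    have hp : ∀ s p, z s p = 1 → pre c l s p (1 - p) := by
      intro s p h
      have h2 := hpre s p
      rw [h] at h2
      simp only [pre]; linarith
    have hn : ∀ s p, z s 0 = 0 → z s 1 = 0 → npre c l s p (1 - p) := by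
      intro s p h0 h1
      have h2 := h5 s p
      rw [h0, h1] at h2
      have hzp : z s p = 0 := by rcases fin2_eq p with rfl | rfl <;> assumption
      rw [hzp] at h2
      simp only [npre]; linarith
    have hcode1 : ∀ s p : Fin 2, z s p = 1 → z s (1-p) = 0 → z (1-s) 0 = 0 →
        z (1-s) 1 = 0 → z = uCode s p := by
      intro s p u1 u2 u3 u4
      funext a b
      rcases fin2_eq a with rfl | rfl <;> rcases fin2_eq b with rfl | rfl <;>
        rcases fin2_eq s with rfl | rfl <;> rcases fin2_eq p with rfl | rfl <;>
        simp only [e10, e11] at u1 u2 u3 u4 <;>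
        simp [uCode] <;> assumption
    have hcode2 : ∀ p q : Fin 2, z 0 p = 1 → z 0 (1-p) = 0 → z 1 q = 1 →
        z 1 (1-q) = 0 → z = uCode 0 p + uCode 1 q := by
      intro p q u1 u2 u3 u4
      funext a b
      rcases fin2_eq a with rfl | rfl <;> rcases fin2_eq b with rfl | rfl <;>
        rcases fin2_eq p with rfl | rfl <;> rcases fin2_eq q with rfl | rfl <;>
        simp only [e10, e11] at u1 u2 u3 u4 <;>
        simp [uCode] <;> norm_num <;> assumption
    have hsum' := hsum
    have hs0 := hsle 0
    have hs1 := hsle 1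
    rcases hz 0 0 with h00 | h00 <;> rcases hz 0 1 with h01 | h01 <;>
      rcases hz 1 0 with h10 | h10 <;> rcases hz 1 1 with h11 | h11
    · exfalso; rw [h00, h01, h10, h11] at hsum'; linarith
    · -- z 1 1 = 1 only : k = 4
      refine ⟨4, hQ, ?_, ?_⟩
      · rw [(bb c l).2.2.2.2.1]
        exact ⟨hp 1 1 h11, hn 0 0 h00 h01, hn 0 1 h00 h01⟩
      · rw [cc4]; exact hcode1 1 1 h11 h10 h00 h01
    · -- z 1 0 = 1 only : k = 0
      refine ⟨0, hQ, ?_, ?_⟩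
      · rw [(bb c l).1]
        exact ⟨hp 1 0 h10, hn 0 0 h00 h01, hn 0 1 h00 h01⟩
      · rw [cc0]; exact hcode1 1 0 h10 h11 h00 h01
    · exfalso; rw [h10, h11] at hs1; linarith
    · -- z 0 1 = 1 only : k = 6
      refine ⟨6, hQ, ?_, ?_⟩
      · rw [(bb c l).2.2.2.2.2.2.1]
        exact ⟨hp 0 1 h01, hn 1 0 h10 h11, hn 1 1 h10 h11⟩
      · rw [cc6]; exact hcode1 0 1 h01 h00 h10 h11
    · -- z 0 1 = 1, z 1 1 = 1 : k = 5
      refine ⟨5, hQ, ?_, ?_⟩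
      · rw [(bb c l).2.2.2.2.2.1]
        exact ⟨hp 0 1 h01, hp 1 1 h11⟩
      · rw [cc5]; exact hcode2 1 1 h01 h00 h11 h10
    · -- z 0 1 = 1, z 1 0 = 1 : k = 7
      refine ⟨7, hQ, ?_, ?_⟩
      · rw [(bb c l).2.2.2.2.2.2.2]
        exact ⟨hp 0 1 h01, hp 1 0 h10⟩
      · rw [cc7]; exact hcode2 1 0 h01 h00 h10 h11
    · exfalso; rw [h10, h11] at hs1; linarith
    · -- z 0 0 = 1 only : k = 2
      refine ⟨2, hQ, ?_, ?_⟩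
      · rw [(bb c l).2.2.1]
        exact ⟨hp 0 0 h00, hn 1 0 h10 h11, hn 1 1 h10 h11⟩
      · rw [cc2]; exact hcode1 0 0 h00 h01 h10 h11
    · -- z 0 0 = 1, z 1 1 = 1 : k = 3
      refine ⟨3, hQ, ?_, ?_⟩
      · rw [(bb c l).2.2.2.1]
        exact ⟨hp 0 0 h00, hp 1 1 h11⟩
      · rw [cc3]; exact hcode2 0 1 h00 h01 h11 h10
    · -- z 0 0 = 1, z 1 0 = 1 : k = 1
      refine ⟨1, hQ, ?_, ?_⟩
      · rw [(bb c l).2.1]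
        exact ⟨hp 1 0 h10, hp 0 0 h00⟩
      · rw [cc1]; exact hcode2 0 0 h00 h01 h10 h11
    · exfalso; rw [h10, h11] at hs1; linarith
    all_goals exfalso; rw [h00, h01] at hs0; linarith
  · rintro ⟨k, hQ, hbr, rfl⟩
    rcases fin8_eq k with rfl | rfl | rfl | rfl | rfl | rfl | rfl | rfl
    · rw [(bb c l).1] at hbr
      rw [cc0]
      exact back_single L lb hL hlb c l hQ 1 0 hbr.1 hbr.2.1 hbr.2.2
    · rw [(bb c l).2.1] at hbr
      rw [cc1]
      exact back_double L lb hL hlb c l hQ 0 0 hbr.2 hbr.1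
    · rw [(bb c l).2.2.1] at hbr
      rw [cc2]
      exact back_single L lb hL hlb c l hQ 0 0 hbr.1 hbr.2.1 hbr.2.2
    · rw [(bb c l).2.2.2.1] at hbr
      rw [cc3]
      exact back_double L lb hL hlb c l hQ 0 1 hbr.1 hbr.2
    · rw [(bb c l).2.2.2.2.1] at hbr
      rw [cc4]
      exact back_single L lb hL hlb c l hQ 1 1 hbr.1 hbr.2.1 hbr.2.2
    · rw [(bb c l).2.2.2.2.2.1] at hbr
      rw [cc5]
      exact back_double L lb hL hlb c l hQ 1 1 hbr.1 hbr.2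
    · rw [(bb c l).2.2.2.2.2.2.1] at hbr
      rw [cc6]
      exact back_single L lb hL hlb c l hQ 0 1 hbr.1 hbr.2.1 hbr.2.2
    · rw [(bb c l).2.2.2.2.2.2.2] at hbr
      rw [cc7]
      exact back_double L lb hL hlb c l hQ 1 0 hbr.1 hbr.2
end

section
/- Let (c,ℓ,z) ∈ ℝ^8 × {0,1}^4 satisfy the refined unary formulation. Then for every direction s ∈ {x,y} and every ordering {p,q} = {i,j}: if z^s_{p,q} = 1 then B_p ←_s B_q (i.e., c^s_p + (1/2)ℓ^s_p ≤ c^s_q − (1/2)ℓ^s_q), and if z^s_{p,q} = 0 then B_p ↛_s B_q (i.e., c^s_p + (1/2)ℓ^s_p ≥ c^s_q − (1/2)ℓ^s_q). -/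
/-- In the refined unary formulation, `z^s_{p,q} = 1` implies that box `p`
precedes box `q` in direction `s`, and `z^s_{p,q} = 0` implies that box `p` does not precede
box `q` in direction `s`. -/
theorem refined_unary_z_interpretation (L : Fin 2 → ℝ) (lb : Fin 2 → Fin 2 → ℝ)
    (hL : ∀ s, 0 < L s) (hlb : ∀ s k, 0 < lb s k)
    (c l z : Vec2) (h : RUform L lb c l z) :
    ∀ s p : Fin 2,
      (z s p = 1 → pre c l s p (1 - p)) ∧ (z s p = 0 → npre c l s p (1 - p)) := by
  obtain ⟨hbin, hbox, hprec, hlbl, hrev, hsum, hpair⟩ := h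
  intro s p
  constructor
  · intro hz
    have h3 := hprec s p
    rw [hz] at h3
    unfold pre
    linarith
  · intro hz
    have h5 := hrev s p
    rw [hz] at h5
    have hz0 : 0 ≤ z s 0 := by rcases hbin s 0 with h0 | h0 <;> rw [h0] <;> norm_num
    have hz1 : 0 ≤ z s 1 := by rcases hbin s 1 with h0 | h0 <;> rw [h0] <;> norm_num
    have hlbpos : 0 ≤ (lb s 0 + lb s 1) * (z s 0 + z s 1) := by
      apply mul_nonneg <;> [linarith [hlb s 0, hlb s 1]; linarith]
    unfold npre
    linarith
end

section
/- Let a, b ∈ ℝ^8, d ∈ ℝ^4 with d ≥ 0 componentwise, and f ∈ ℝ. Suppose the inequality a·c + b·ℓ + d·z ≤ f holds for every point (c,ℓ,z) ∈ Em(Q^FLP, D^8, C^8). Then the inequality a·c + b·ℓ + d·u ≤ f holds for every point (c,ℓ,u) ∈ Em(Q^FLP, D^4, U^4), where u is identified with z coordinatewise, i.e., u^s_{p,q} plays the role of z^s_{p,q}. -/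
lemma dotp_uCode_lem (d : Vec2) (s p : Fin 2) : dotp d (uCode s p) = d s p := by
  fin_cases s <;> fin_cases p <;>
    simp [dotp, uCode, Fin.sum_univ_two]

lemma dotp_add_right (d x y : Vec2) : dotp d (x + y) = dotp d x + dotp d y := by
  simp [dotp, mul_add, Finset.sum_add_distrib]

lemma dotp_le_add (d : Vec2) (hd : ∀ s p, 0 ≤ d s p) (s p s' p' : Fin 2) :
    dotp d (uCode s p) ≤ dotp d (uCode s p + uCode s' p') := by
  rw [dotp_add_right, dotp_uCode_lem, dotp_uCode_lem]
  linarith [hd s' p']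

/-- A valid inequality `a·c + b·ℓ + d·z ≤ f` (with `d ≥ 0`) for
`Em(Q^FLP, D⁸, C⁸)` translates, identifying `u` with `z` coordinatewise, to a valid
inequality for `Em(Q^FLP, D⁴, U⁴)`. -/
theorem valid_inequality_C8_to_U4 (L : Fin 2 → ℝ) (lb ub : Fin 2 → Fin 2 → ℝ)
    (A : Fin 2 → ℝ) (hL : ∀ s, 0 < L s) (hlb : ∀ s k, 0 < lb s k)
    (hub : ∀ s k, lb s k ≤ ub s k) (hA : ∀ k, 0 < A k)
    (a b d : Vec2) (f : ℝ) (hd : ∀ s p, 0 ≤ d s p)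
    (hvalid : ∀ c l z : Vec2, EmC8 (QFLP L lb ub A) c l z →
      dotp a c + dotp b l + dotp d z ≤ f) :
    ∀ c l u : Vec2, EmU4 (QFLP L lb ub A) c l u →
      dotp a c + dotp b l + dotp d u ≤ f := by
  intro c l u h
  obtain ⟨s, p, hQ, hpre, rfl⟩ := h
  fin_cases s <;> fin_cases p <;>
    simp only [show (1:Fin 2) - 0 = 1 from rfl, show (1:Fin 2) - 1 = 0 from rfl] at hpre
  · show dotp a c + dotp b l + dotp d (uCode 0 0) ≤ f
    -- pre c l 0 0 1
    by_cases h1 : pre c l 1 0 1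
    · have H := hvalid c l (c8code 1) ⟨1, hQ, ⟨h1, hpre⟩, rfl⟩
      have hz : c8code 1 = uCode 0 0 + uCode 1 0 := add_comm (uCode 1 0) (uCode 0 0)
      rw [hz] at H
      have := dotp_le_add d hd 0 0 1 0
      linarith
    · by_cases h2 : pre c l 1 1 0
      · have H := hvalid c l (c8code 3) ⟨3, hQ, ⟨hpre, h2⟩, rfl⟩
        have hz : c8code 3 = uCode 0 0 + uCode 1 1 := rfl
        rw [hz] at H
        have := dotp_le_add d hd 0 0 1 1
        linarith
      · have H := hvalid c l (c8code 2)
          ⟨2, hQ, ⟨hpre, le_of_not_ge h1, le_of_not_ge h2⟩, rfl⟩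
        have hz : c8code 2 = uCode 0 0 := rfl
        rw [hz] at H
        linarith
  · show dotp a c + dotp b l + dotp d (uCode 0 1) ≤ f
    -- pre c l 0 1 0
    by_cases h1 : pre c l 1 0 1
    · have H := hvalid c l (c8code 7) ⟨7, hQ, ⟨hpre, h1⟩, rfl⟩
      have hz : c8code 7 = uCode 0 1 + uCode 1 0 := rfl
      rw [hz] at H
      have := dotp_le_add d hd 0 1 1 0
      linarith
    · by_cases h2 : pre c l 1 1 0
      · have H := hvalid c l (c8code 5) ⟨5, hQ, ⟨hpre, h2⟩, rfl⟩
        have hz : c8code 5 = uCode 0 1 + uCode 1 1 := add_comm (uCode 1 1) (uCode 0 1)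
        rw [hz] at H
        have := dotp_le_add d hd 0 1 1 1
        linarith
      · have H := hvalid c l (c8code 6)
          ⟨6, hQ, ⟨hpre, le_of_not_ge h1, le_of_not_ge h2⟩, rfl⟩
        have hz : c8code 6 = uCode 0 1 := rfl
        rw [hz] at H
        linarith
  · show dotp a c + dotp b l + dotp d (uCode 1 0) ≤ f
    -- pre c l 1 0 1
    by_cases h1 : pre c l 0 0 1
    · have H := hvalid c l (c8code 1) ⟨1, hQ, ⟨hpre, h1⟩, rfl⟩
      have hz : c8code 1 = uCode 1 0 + uCode 0 0 := rfl
      rw [hz] at H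
      have := dotp_le_add d hd 1 0 0 0
      linarith
    · by_cases h2 : pre c l 0 1 0
      · have H := hvalid c l (c8code 7) ⟨7, hQ, ⟨h2, hpre⟩, rfl⟩
        have hz : c8code 7 = uCode 1 0 + uCode 0 1 := add_comm (uCode 0 1) (uCode 1 0)
        rw [hz] at H
        have := dotp_le_add d hd 1 0 0 1
        linarith
      · have H := hvalid c l (c8code 0)
          ⟨0, hQ, ⟨hpre, le_of_not_ge h1, le_of_not_ge h2⟩, rfl⟩
        have hz : c8code 0 = uCode 1 0 := rfl
        rw [hz] at H
        linarith
  · show dotp a c + dotp b l + dotp d (uCode 1 1) ≤ f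
    -- pre c l 1 1 0
    by_cases h1 : pre c l 0 0 1
    · have H := hvalid c l (c8code 3) ⟨3, hQ, ⟨h1, hpre⟩, rfl⟩
      have hz : c8code 3 = uCode 1 1 + uCode 0 0 := add_comm (uCode 0 0) (uCode 1 1)
      rw [hz] at H
      have := dotp_le_add d hd 1 1 0 0
      linarith
    · by_cases h2 : pre c l 0 1 0
      · have H := hvalid c l (c8code 5) ⟨5, hQ, ⟨h2, hpre⟩, rfl⟩
        have hz : c8code 5 = uCode 1 1 + uCode 0 1 := rfl
        rw [hz] at H
        have := dotp_le_add d hd 1 1 0 1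
        linarith
      · have H := hvalid c l (c8code 4)
          ⟨4, hQ, ⟨hpre, le_of_not_ge h1, le_of_not_ge h2⟩, rfl⟩
        have hz : c8code 4 = uCode 1 1 := rfl
        rw [hz] at H
        linarith
end

section
/- Let a, b ∈ ℝ^8, d = (d^y_{i,j}, d^x_{i,j}, d^y_{j,i}, d^x_{j,i}) ∈ ℝ^4, and f ∈ ℝ. Suppose the inequality a·c + b·ℓ + d·u ≤ f holds for every point (c,ℓ,u) ∈ Em(Q^FLP, D^4, U^4), and suppose that either d^y_{i,j} = d^y_{j,i} = 0 or d^x_{i,j} = d^x_{j,i} = 0. Then the inequality a·c + b·ℓ + d·z ≤ f holds for every point (c,ℓ,z) ∈ Em(Q^FLP, D^8, C^8). -/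
/-!
A branch of `D⁸` asserts one or two relations of `D⁴`, at most one per direction, and its `C⁸`
code is the sum of their `U⁴` codes. If `d` vanishes in one direction, then `d·z` only sees the
relation in the other direction, so `(c, ℓ, z)` has the same objective value as a point of
`Em(Q^FLP, D⁴, U⁴)` with the same `(c, ℓ)`.
-/

lemma dotp_eq_of_eqOn_support {d x y : Vec2} (h : ∀ s q, d s q ≠ 0 → x s q = y s q) :
    dotp d x = dotp d y := by
  refine Finset.sum_congr rfl fun s _ => Finset.sum_congr rfl fun q _ => ?_
  by_cases hd : d s q = 0
  · simp [hd]
  · rw [h s q hd]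

/- When the code vanishes in direction `t`, any relation the branch asserts in the other
direction is a witness. -/
lemma exists_pre_c8code_eq_uCode {c l : Vec2} {k : Fin 8} (h : br c l k) (t : Fin 2) :
    ∃ s p, pre c l s p (1 - p) ∧ c8code k t = uCode s p t := by
  fin_cases k <;> fin_cases t <;>
    simp [br, c8code, uCode, Fin.exists_fin_two, funext_iff, Fin.forall_fin_two] at h ⊢ <;>
    tauto

theorem valid_inequality_U4_to_C8_general (L : Fin 2 → ℝ) (lb ub : Fin 2 → Fin 2 → ℝ)
    (A : Fin 2 → ℝ)
    (a b d : Vec2) (f : ℝ)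
    (hd : (d 1 0 = 0 ∧ d 1 1 = 0) ∨ (d 0 0 = 0 ∧ d 0 1 = 0))
    (hvalid : ∀ c l u : Vec2, EmU4 (QFLP L lb ub A) c l u →
      dotp a c + dotp b l + dotp d u ≤ f) :
    ∀ c l z : Vec2, EmC8 (QFLP L lb ub A) c l z →
      dotp a c + dotp b l + dotp d z ≤ f := by
  rintro c l z ⟨k, hQ, hbr, rfl⟩
  obtain ⟨t, hdt⟩ : ∃ t : Fin 2, ∀ s q, s ≠ t → d s q = 0 := by
    rcases hd with ⟨h0, h1⟩ | ⟨h0, h1⟩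
    · exact ⟨0, by simp [Fin.forall_fin_two, h0, h1]⟩
    · exact ⟨1, by simp [Fin.forall_fin_two, h0, h1]⟩
  obtain ⟨s, p, hpre, hcode⟩ := exists_pre_c8code_eq_uCode hbr t
  have hdot : dotp d (c8code k) = dotp d (uCode s p) :=
    dotp_eq_of_eqOn_support fun s' q hq => by
      obtain rfl : s' = t := by_contra fun hs => hq (hdt s' q hs)
      exact congrFun hcode q
  rw [hdot]
  exact hvalid c l _ ⟨s, p, hQ, hpre, rfl⟩

/-- A valid inequality `a·c + b·ℓ + d·u ≤ f` for `Em(Q^FLP, D⁴, U⁴)`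
whose `d`-coefficients vanish in one of the two directions is a valid inequality for
`Em(Q^FLP, D⁸, C⁸)`. -/
theorem valid_inequality_U4_to_C8 (L : Fin 2 → ℝ) (lb ub : Fin 2 → Fin 2 → ℝ)
    (A : Fin 2 → ℝ) (hL : ∀ s, 0 < L s) (hlb : ∀ s k, 0 < lb s k)
    (hub : ∀ s k, lb s k ≤ ub s k) (hA : ∀ k, 0 < A k)
    (a b d : Vec2) (f : ℝ)
    (hd : (d 1 0 = 0 ∧ d 1 1 = 0) ∨ (d 0 0 = 0 ∧ d 0 1 = 0))
    (hvalid : ∀ c l u : Vec2, EmU4 (QFLP L lb ub A) c l u →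
      dotp a c + dotp b l + dotp d u ≤ f) :
    ∀ c l z : Vec2, EmC8 (QFLP L lb ub A) c l z →
      dotp a c + dotp b l + dotp d z ≤ f :=
  valid_inequality_U4_to_C8_general L lb ub A a b d f hd hvalid
end

section
/- Let {r,s} = {x,y} be an assignment of the two directions and suppose L^s < ub^s_i + ub^s_j. Then the inequality (ub^s_i + ub^s_j − L^s)·(z^r_{i,j} + z^r_{j,i}) ≥ ℓ^s_i + ℓ^s_j − L^s holds at every point (c,ℓ,z) ∈ Em(Q^ub, D^8, C^8), and likewise (ub^s_i + ub^s_j − L^s)·(u^r_{i,j} + u^r_{j,i}) ≥ ℓ^s_i + ℓ^s_j − L^s holds at every point (c,ℓ,u) ∈ Em(Q^ub, D^4, U^4). -/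
lemma sep_le (L : Fin 2 → ℝ) (lb ub : Fin 2 → Fin 2 → ℝ) (c l : Vec2) (s : Fin 2)
    (hQ : Qub L lb ub c l) (hp : pre c l s 0 1 ∨ pre c l s 1 0) :
    l s 0 + l s 1 ≤ L s := by
  obtain ⟨hs, _⟩ := hQ
  have h0 := hs s 0
  have h1 := hs s 1
  unfold pre at hp
  rcases hp with h | h <;> linarith [h0.1, h0.2, h1.1, h1.2]

/-- If `L^s < ub^s_i + ub^s_j` then
`(ub^s_i + ub^s_j − L^s)(z^r_{i,j} + z^r_{j,i}) ≥ ℓ^s_i + ℓ^s_j − L^s` is valid for both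
`Em(Q^ub, D⁸, C⁸)` and `Em(Q^ub, D⁴, U⁴)`. -/
theorem upper_bound_inequality_two_directions (L : Fin 2 → ℝ) (lb ub : Fin 2 → Fin 2 → ℝ)
    (hL : ∀ s, 0 < L s) (hlb : ∀ s k, 0 < lb s k) (hub : ∀ s k, lb s k ≤ ub s k)
    (r s : Fin 2) (hrs : r ≠ s) (hLs : L s < ub s 0 + ub s 1) :
    (∀ c l z : Vec2, EmC8 (Qub L lb ub) c l z →
        l s 0 + l s 1 - L s ≤ (ub s 0 + ub s 1 - L s) * (z r 0 + z r 1)) ∧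
    (∀ c l u : Vec2, EmU4 (Qub L lb ub) c l u →
        l s 0 + l s 1 - L s ≤ (ub s 0 + ub s 1 - L s) * (u r 0 + u r 1)) := by
  constructor
  · rintro c l z ⟨k, hQ, hbr, rfl⟩
    fin_cases r <;> fin_cases s <;> (try exact absurd rfl hrs) <;>
      fin_cases k <;>
      simp only [br, c8code, uCode, pre, npre, Pi.add_apply, Fin.isValue, Fin.mk_one,
        Fin.mk_zero, Matrix.cons_val_zero, Matrix.cons_val_one, Matrix.head_cons,
        Matrix.cons_val_succ] at hbr hLs ⊢ <;>
      norm_num [uCode] <;>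
      obtain ⟨h1, h2⟩ := hbr <;>
      first
        | linarith [h1, h2, (hQ.1 0 0).1, (hQ.1 0 0).2, (hQ.1 0 1).1, (hQ.1 0 1).2, (hQ.1 1 0).1, (hQ.1 1 0).2, (hQ.1 1 1).1, (hQ.1 1 1).2, (hQ.2 0 0).2, (hQ.2 0 1).2, (hQ.2 1 0).2, (hQ.2 1 1).2]
        | linarith [h1, h2.1, h2.2, (hQ.1 0 0).1, (hQ.1 0 0).2, (hQ.1 0 1).1, (hQ.1 0 1).2, (hQ.1 1 0).1, (hQ.1 1 0).2, (hQ.1 1 1).1, (hQ.1 1 1).2, (hQ.2 0 0).2, (hQ.2 0 1).2, (hQ.2 1 0).2, (hQ.2 1 1).2]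
  · rintro c l u ⟨t, p, hQ, hpre, rfl⟩
    fin_cases r <;> fin_cases s <;> (try exact absurd rfl hrs) <;>
      fin_cases t <;> fin_cases p <;>
      simp only [uCode, pre, Fin.isValue, Fin.mk_one, Fin.mk_zero] at hpre hLs ⊢ <;>
      norm_num [uCode] at hpre ⊢ <;>
      linarith [hpre, (hQ.1 0 0).1, (hQ.1 0 0).2, (hQ.1 0 1).1, (hQ.1 0 1).2, (hQ.1 1 0).1, (hQ.1 1 0).2, (hQ.1 1 1).1, (hQ.1 1 1).2, (hQ.2 0 0).2, (hQ.2 0 1).2, (hQ.2 1 0).2, (hQ.2 1 1).2]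
end

section
/- For every direction s ∈ {x,y} and every ordering {p,q} = {i,j}, the objective inequality d^s_{i,j} ≥ c^s_p − c^s_q + ℓ^s_p + lb^s_q·(z^s_{p,q} + z^s_{q,p}) − L^s·(1 − z^s_{p,q}) holds at every point (c,ℓ,d,z) ∈ Em(Q^obj, D^8, C^8). -/
private lemma key_obj (L lbq cp cq lp lq dv zp zq : ℝ)
    (hlp : lp / 2 ≤ cp) (hcp : cp ≤ L - lp / 2)
    (hlq : lq / 2 ≤ cq) (hcq : cq ≤ L - lq / 2)
    (hlbq : lbq ≤ lq) (hd1 : cp - cq ≤ dv) (hd2 : cq - cp ≤ dv)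
    (hz : (zp = 0 ∧ zq = 0) ∨ (zp = 1 ∧ zq = 0 ∧ cp + lp / 2 ≤ cq - lq / 2) ∨
      (zp = 0 ∧ zq = 1 ∧ cq + lq / 2 ≤ cp - lp / 2)) :
    cp - cq + lp + lbq * (zp + zq) - L * (1 - zp) ≤ dv := by
  rcases hz with ⟨h1, h2⟩ | ⟨h1, h2, h3⟩ | ⟨h1, h2, h3⟩ <;> subst h1 <;> subst h2 <;>
    linarith

/-- The objective inequality
`d^s ≥ c^s_p − c^s_q + ℓ^s_p + lb^s_q (z^s_{p,q} + z^s_{q,p}) − L^s (1 − z^s_{p,q})` is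
valid for `Em(Q^obj, D⁸, C⁸)`. -/
theorem objective_inequality_two (L : Fin 2 → ℝ) (lb : Fin 2 → Fin 2 → ℝ)
    (hL : ∀ s, 0 < L s) (hlb : ∀ s k, 0 < lb s k) :
    ∀ (c l : Vec2) (dv : Fin 2 → ℝ) (z : Vec2), EmC8obj L lb c l dv z →
      ∀ s p : Fin 2,
        c s p - c s (1 - p) + l s p + lb s (1 - p) * (z s p + z s (1 - p)) -
            L s * (1 - z s p) ≤ dv s := by
  rintro c l dv z ⟨k, ⟨⟨hS, hlb2⟩, hdv⟩, hbr, rfl⟩ s p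
  have hfloor := fun s k => hS s k
  refine key_obj (L s) (lb s (1 - p)) (c s p) (c s (1 - p)) (l s p) (l s (1 - p))
    (dv s) _ _ (hfloor s p).1 (by linarith [(hfloor s p).2])
    (hfloor s (1 - p)).1 (by linarith [(hfloor s (1 - p)).2]) (hlb2 s (1 - p)) ?_ ?_ ?_
  · fin_cases p <;> [exact (hdv s).1; exact (hdv s).2]
  · fin_cases p <;> [exact (hdv s).2; exact (hdv s).1]
  · fin_cases s <;> fin_cases p <;> fin_cases k <;>
      simp only [br, pre, npre, Matrix.cons_val_zero, Matrix.cons_val_one,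
        Matrix.head_cons, Matrix.cons_val_succ] at hbr <;>
      norm_num [c8code, uCode, Matrix.cons_val_zero, Matrix.cons_val_one,
        Matrix.head_cons, Matrix.cons_val_succ, Pi.add_apply, Fin.ext_iff] <;>
      first
        | linarith [hbr.1, hbr.2]
        | linarith [hbr.1, hbr.2.1, hbr.2.2]
end

section
/- For every direction s ∈ {x,y} and every ordering {p,q} = {i,j}, the objective inequality d^s_{i,j} ≥ c^s_p − c^s_q + (lb^s_p + lb^s_q)·z^s_{p,q} holds at every point (c,ℓ,d,z) ∈ Em(Q^obj, D^8, C^8). -/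
/-- The objective inequality
`d^s ≥ c^s_p − c^s_q + (lb^s_p + lb^s_q) z^s_{p,q}` is valid for `Em(Q^obj, D⁸, C⁸)`. -/
theorem objective_inequality_three (L : Fin 2 → ℝ) (lb : Fin 2 → Fin 2 → ℝ)
    (hL : ∀ s, 0 < L s) (hlb : ∀ s k, 0 < lb s k) :
    ∀ (c l : Vec2) (dv : Fin 2 → ℝ) (z : Vec2), EmC8obj L lb c l dv z →
      ∀ s p : Fin 2,
        c s p - c s (1 - p) + (lb s p + lb s (1 - p)) * z s p ≤ dv s := by
  rintro c l dv z ⟨k, ⟨⟨hs, hlb'⟩, hd⟩, hbr, rfl⟩ s p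
  have h00 := hlb' 0 0; have h01 := hlb' 0 1; have h10 := hlb' 1 0; have h11 := hlb' 1 1
  have hd0 := hd 0; have hd1 := hd 1
  fin_cases k <;> fin_cases s <;> fin_cases p <;>
    simp only [br, c8code, uCode, pre, npre, Matrix.cons_val_zero, Matrix.cons_val_one,
      Matrix.head_cons, Matrix.cons_val_fin_one, Pi.add_apply, Fin.isValue] at hbr ⊢ <;>
    norm_num [uCode] at hbr ⊢ <;>
    obtain ⟨h1, h2⟩ := hbr <;> linarith
end

section
/- Let F^RU be the set of (c,ℓ,z) such that for every pair (i,j) ∈ 𝒫 the restriction (c_i, c_j, ℓ_i, ℓ_j, z^{i,j}) satisfies the refined unary formulation for the pair (i,j). Then the orthogonal projection of F^RU onto the (c,ℓ) coordinates equals the set of N-box layouts satisfying, for every box k and s ∈ {x,y}, the stay-on-the-floor constraints (1/2)ℓ^s_k ≤ c^s_k ≤ L^s − (1/2)ℓ^s_k and the lower bounds ℓ^s_k ≥ lb^s_k, and, for every pair (i,j) ∈ 𝒫, the non-overlap disjunction D^4_{i,j}. In particular, F^RU is a valid mixed-integer formulation of the non-overlap constraints of the N-box floor layout problem. -/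
/-- Restriction of `N`-box data to the pair of boxes `(i, j)`. -/
def restr {N : ℕ} (c : Fin 2 → Fin N → ℝ) (i j : Fin N) : Vec2 :=
  fun s k => c s (if k = 0 then i else j)

/-- Restriction of per-box data (e.g. areas) to the pair `(i, j)`. -/
def restrA {N : ℕ} (A : Fin N → ℝ) (i j : Fin N) : Fin 2 → ℝ :=
  fun k => A (if k = 0 then i else j)

/-- Restriction of the `N`-box binary variables `z^s_{p,q}` to the pair `(i, j)`:
coordinate `(s, 0)` is `z^s_{i,j}` and coordinate `(s, 1)` is `z^s_{j,i}`. -/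
def restrz {N : ℕ} (z : Fin 2 → Fin N → Fin N → ℝ) (i j : Fin N) : Vec2 :=
  fun s k => if k = 0 then z s i j else z s j i

/-- The pairwise feasible set `𝓛_{i,j}` (in restricted data): stay-on-the-floor,
width bounds, area constraints, and the non-overlap disjunction `D⁴`. -/
def Lpair (L : Fin 2 → ℝ) (lb ub : Fin 2 → Fin 2 → ℝ) (A : Fin 2 → ℝ) (c l : Vec2) : Prop :=
  (∀ s k, l s k / 2 ≤ c s k ∧ c s k ≤ L s - l s k / 2) ∧
  (∀ s k, lb s k ≤ l s k ∧ l s k ≤ ub s k) ∧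
  (∀ k, A k ≤ l 0 k * l 1 k) ∧ D4 c l

/-- The `N`-box feasible set `𝓛`. -/
def LN (N : ℕ) (L : Fin 2 → ℝ) (lb ub : Fin 2 → Fin N → ℝ) (A : Fin N → ℝ)
    (c l : Fin 2 → Fin N → ℝ) : Prop :=
  (∀ s k, l s k / 2 ≤ c s k ∧ c s k ≤ L s - l s k / 2) ∧
  (∀ s k, lb s k ≤ l s k ∧ l s k ≤ ub s k) ∧
  (∀ k, A k ≤ l 0 k * l 1 k) ∧
  (∀ i j : Fin N, i < j → D4 (restr c i j) (restr l i j))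

lemma fin2cases {P : Fin 2 → Prop} (h0 : P 0) (h1 : P 1) : ∀ p, P p := by
  intro p; fin_cases p; exacts [h0, h1]

lemma RU_forward (L : Fin 2 → ℝ) (lb c l z : Vec2) (hlb : ∀ s k, 0 < lb s k)
    (h : RUform L lb c l z) :
    (∀ s p, (l s p / 2 ≤ c s p ∧ c s p ≤ L s - l s p / 2) ∧ lb s p ≤ l s p) ∧ D4 c l := by
  obtain ⟨hzb, h2, h3, h4, h5, h6, h7⟩ := h
  have hz0 : ∀ s p, 0 ≤ z s p := by
    intro s p; rcases hzb s p with h|h <;> rw [h] <;> norm_num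
  constructor
  · intro s p
    have hA := (h2 s p).1
    have hB := (h2 s p).2
    have hm1 : 0 ≤ lb s (1-p) * z s (1-p) := mul_nonneg (hlb s _).le (hz0 s _)
    have hm2 : 0 ≤ lb s (1-p) * z s p := mul_nonneg (hlb s _).le (hz0 s _)
    exact ⟨⟨by linarith, by linarith⟩, h4 s p⟩
  · have key : ∀ s p : Fin 2, z s p = 1 → pre c l s p (1 - p) := by
      intro s p hp
      have := h3 s p
      rw [hp] at this
      simpa [pre] using this
    rcases hzb 1 0 with h10|h10
    · rcases hzb 0 0 with h00|h00
      · rcases hzb 1 1 with h11|h11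
        · rcases hzb 0 1 with h01|h01
          · exfalso; rw [h10, h00, h11, h01] at h6; norm_num at h6
          · exact Or.inr (Or.inr (Or.inr (by simpa using key 0 1 h01)))
        · exact Or.inr (Or.inr (Or.inl (by simpa using key 1 1 h11)))
      · exact Or.inr (Or.inl (by simpa using key 0 0 h00))
    · exact Or.inl (by simpa using key 1 0 h10)

open Classical in
lemma RU_backward (L : Fin 2 → ℝ) (lb c l : Vec2) (hL : ∀ s, 0 < L s)
    (hlb : ∀ s k, 0 < lb s k)
    (hfl : ∀ s k, l s k / 2 ≤ c s k ∧ c s k ≤ L s - l s k / 2)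
    (hll : ∀ s k, lb s k ≤ l s k) (hd : D4 c l) :
    RUform L lb c l (fun s p => if pre c l s p (1 - p) then 1 else 0) := by
  have e10 : (1 : Fin 2) - 0 = 1 := rfl
  have e11 : (1 : Fin 2) - 1 = 0 := rfl
  have hnot : ∀ s : Fin 2, ¬ (pre c l s 0 1 ∧ pre c l s 1 0) := by
    intro s ⟨h1, h2⟩
    have a0 := (hlb s 0).trans_le (hll s 0)
    have a1 := (hlb s 1).trans_le (hll s 1)
    simp only [pre] at h1 h2
    linarith
  refine ⟨?_, ?_, ?_, fun s p => hll s p, ?_, ?_, ?_⟩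
  · intro s p
    by_cases h : pre c l s p (1 - p)
    · right; simp [h]
    · left; simp [h]
  · intro s
    simp only
    refine fin2cases ?_ ?_
    · simp only [e10, e11]
      constructor
      · by_cases h : pre c l s 1 0
        · rw [if_pos h]
          simp only [pre] at h
          have := (hfl s 1).1
          have := hll s 1
          linarith
        · rw [if_neg h, mul_zero]
          linarith [(hfl s 0).1]
      · by_cases h : pre c l s 0 1
        · rw [if_pos h, mul_one]
          simp only [pre] at h
          have := (hfl s 1).2
          have := hll s 1
          linarith
        · rw [if_neg h, mul_zero]
          linarith [(hfl s 0).2]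
    · simp only [e10, e11]
      constructor
      · by_cases h : pre c l s 0 1
        · rw [if_pos h, mul_one]
          simp only [pre] at h
          have := (hfl s 0).1
          have := hll s 0
          linarith
        · rw [if_neg h, mul_zero]
          linarith [(hfl s 1).1]
      · by_cases h : pre c l s 1 0
        · rw [if_pos h, mul_one]
          simp only [pre] at h
          have := (hfl s 0).2
          have := hll s 0
          linarith
        · rw [if_neg h, mul_zero]
          linarith [(hfl s 1).2]
  · intro s p
    simp only
    by_cases h : pre c l s p (1 - p)
    · rw [if_pos h]
      simp only [pre] at h
      linarith
    · rw [if_neg h]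
      have h1 := (hfl s p).2
      have h2 := (hfl s (1 - p)).1
      have h4 := (hlb s (1 - p)).trans_le (hll s (1 - p))
      linarith
  · intro s
    simp only [e10, e11]
    have hc0 := hfl s 0
    have hc1 := hfl s 1
    have hl0 := hll s 0
    have hl1 := hll s 1
    have hb0 := hlb s 0
    have hb1 := hlb s 1
    refine fin2cases ?_ ?_
    · simp only [e10, e11]
      by_cases h1 : pre c l s 0 1 <;> by_cases h2 : pre c l s 1 0
      · exact absurd ⟨h1, h2⟩ (hnot s)
      · rw [if_pos h1, if_neg h2]
        simp only [pre] at h1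
        linarith [hL s]
      · rw [if_neg h1, if_pos h2]
        simp only [pre] at h2
        linarith
      · rw [if_neg h1, if_neg h2]
        simp only [pre, not_le] at h1
        linarith
    · simp only [e10, e11]
      by_cases h1 : pre c l s 0 1 <;> by_cases h2 : pre c l s 1 0
      · exact absurd ⟨h1, h2⟩ (hnot s)
      · rw [if_pos h1, if_neg h2]
        simp only [pre] at h1
        linarith
      · rw [if_neg h1, if_pos h2]
        simp only [pre] at h2
        linarith [hL s]
      · rw [if_neg h1, if_neg h2]
        simp only [pre, not_le] at h2
        linarith
  · have e0 : ∀ (s p q : Fin 2), (0:ℝ) ≤ (if pre c l s p q then (1:ℝ) else 0) := by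
      intro s p q; by_cases hh : pre c l s p q <;> simp [hh]
    simp only [e10, e11]
    rcases hd with h|h|h|h
    · rw [show (if pre c l 1 0 1 then (1:ℝ) else 0) = 1 from if_pos h]
      linarith [e0 0 0 1, e0 0 1 0, e0 1 1 0]
    · rw [show (if pre c l 0 0 1 then (1:ℝ) else 0) = 1 from if_pos h]
      linarith [e0 0 1 0, e0 1 0 1, e0 1 1 0]
    · rw [show (if pre c l 1 1 0 then (1:ℝ) else 0) = 1 from if_pos h]
      linarith [e0 0 0 1, e0 0 1 0, e0 1 0 1]
    · rw [show (if pre c l 0 1 0 then (1:ℝ) else 0) = 1 from if_pos h]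
      linarith [e0 0 0 1, e0 1 0 1, e0 1 1 0]
  · intro s
    simp only [e10, e11]
    by_cases h1 : pre c l s 0 1 <;> by_cases h2 : pre c l s 1 0 <;>
      simp [h1, h2]
    exact absurd ⟨h1, h2⟩ (hnot s)

/-- The projection of `F^RU` (the pairwise refined unary formulations,
imposed on every pair `(i,j) ∈ 𝒫`) onto the layout variables is exactly the set of `N`-box
layouts satisfying stay-on-the-floor, the width lower bounds, and all non-overlap
disjunctions `D⁴_{i,j}`. -/
theorem refined_unary_Nbox_valid (N : ℕ) (hN : 2 ≤ N) (L : Fin 2 → ℝ)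
    (lb : Fin 2 → Fin N → ℝ) (hL : ∀ s, 0 < L s) (hlb : ∀ s k, 0 < lb s k) :
    ∀ c l : Fin 2 → Fin N → ℝ,
      (∃ z : Fin 2 → Fin N → Fin N → ℝ, ∀ i j : Fin N, i < j →
          RUform L (restr lb i j) (restr c i j) (restr l i j) (restrz z i j)) ↔
      ((∀ s k, l s k / 2 ≤ c s k ∧ c s k ≤ L s - l s k / 2) ∧
       (∀ s k, lb s k ≤ l s k) ∧
       (∀ i j : Fin N, i < j → D4 (restr c i j) (restr l i j))) := by
  classical
  intro c l
  have hlbr : ∀ (i j : Fin N) (s k : Fin 2), 0 < restr lb i j s k := by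
    intro i j s k; simp only [restr]; exact hlb s _
  constructor
  · rintro ⟨z, hz⟩
    have main : ∀ i j : Fin N, i < j →
        (∀ s p, (restr l i j s p / 2 ≤ restr c i j s p ∧
            restr c i j s p ≤ L s - restr l i j s p / 2) ∧
            restr lb i j s p ≤ restr l i j s p) ∧
          D4 (restr c i j) (restr l i j) :=
      fun i j hij => RU_forward L _ _ _ _ (hlbr i j) (hz i j hij)
    have hbox : ∀ (s : Fin 2) (k : Fin N),
        (l s k / 2 ≤ c s k ∧ c s k ≤ L s - l s k / 2) ∧ lb s k ≤ l s k := by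
      intro s k
      by_cases hk : (k : ℕ) = 0
      · have h01 : k < (⟨1, by omega⟩ : Fin N) := by simp [Fin.lt_def]; omega
        have := (main k ⟨1, by omega⟩ h01).1 s 0
        simpa [restr] using this
      · have h0k : (⟨0, by omega⟩ : Fin N) < k := by simp [Fin.lt_def]; omega
        have := (main ⟨0, by omega⟩ k h0k).1 s 1
        simpa [restr] using this
    exact ⟨fun s k => (hbox s k).1, fun s k => (hbox s k).2,
      fun i j hij => (main i j hij).2⟩
  · rintro ⟨hfl, hll, hd4⟩
    refine ⟨fun s p q => if c s p + l s p / 2 ≤ c s q - l s q / 2 then 1 else 0,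
      fun i j hij => ?_⟩
    have hz : restrz (fun s p q => if c s p + l s p / 2 ≤ c s q - l s q / 2
          then (1:ℝ) else 0) i j =
        fun s k => if pre (restr c i j) (restr l i j) s k (1 - k) then 1 else 0 := by
      funext s k
      fin_cases k <;> simp [restrz, restr, pre]
    rw [hz]
    refine RU_backward L _ _ _ hL (hlbr i j) ?_ ?_ (hd4 i j hij)
    · intro s k; simp only [restr]; exact hfl s _
    · intro s k; simp only [restr]; exact hll s _
end

section
/- Fix a direction s ∈ {x,y}, a pair of boxes i ≠ j, and a path of pairwise distinct boxes t^0 = i, t^1, …, t^m, t^{m+1} = j with m ≥ 1. Define γ_P := Σ_{ξ=1}^m lb^s_{t^ξ} and 𝓜^s_P(z) := 1 + Σ_{ξ=1}^{m+1} (z^s_{t^{ξ−1},t^ξ} − 1). Then the multi-box inequality c^s_i + (1/2)ℓ^s_i + γ_P·𝓜^s_P(z) ≤ c^s_j − (1/2)ℓ^s_j + L^s·(1 − z^s_{i,j}) holds at every point (c,ℓ,z) ∈ F^RU. -/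
/-- The multi-box path inequality
`c^s_i + ℓ^s_i/2 + γ_P·𝓜^s_P(z) ≤ c^s_j − ℓ^s_j/2 + L^s (1 − z^s_{i,j})` is valid for
`F^RU`, where `i = t 0`, `j = t (m+1)`, `γ_P = ∑_{ξ=1}^m lb^s_{t ξ}` and
`𝓜^s_P(z) = 1 + ∑_{ξ=1}^{m+1} (z^s_{t(ξ−1), t ξ} − 1)`. -/
theorem multibox_path_inequality (N : ℕ) (hN : 2 ≤ N) (L : Fin 2 → ℝ)
    (lb : Fin 2 → Fin N → ℝ) (hL : ∀ s, 0 < L s) (hlb : ∀ s k, 0 < lb s k)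
    (c l : Fin 2 → Fin N → ℝ) (z : Fin 2 → Fin N → Fin N → ℝ)
    (hFRU : ∀ i j : Fin N, i < j →
      RUform L (restr lb i j) (restr c i j) (restr l i j) (restrz z i j))
    (s : Fin 2) (m : ℕ) (hm : 1 ≤ m) (t : ℕ → Fin N)
    (hdistinct : ∀ ξ η : ℕ, ξ ≤ m + 1 → η ≤ m + 1 → ξ ≠ η → t ξ ≠ t η) :
    c s (t 0) + l s (t 0) / 2 +
        (∑ ξ ∈ Finset.Icc 1 m, lb s (t ξ)) *
          (1 + ∑ ξ ∈ Finset.Icc 1 (m + 1), (z s (t (ξ - 1)) (t ξ) - 1)) ≤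
      c s (t (m + 1)) - l s (t (m + 1)) / 2 + L s * (1 - z s (t 0) (t (m + 1))) := by

  -- binary facts for any distinct pair
  have hbin : ∀ p q : Fin N, p ≠ q → z s p q = 0 ∨ z s p q = 1 := by
    intro p q hpq
    rcases lt_or_gt_of_ne hpq with h | h
    · have := (hFRU p q h).1 s 0
      simpa [restrz] using this
    · have := (hFRU q p h).1 s 1
      simpa [restrz] using this
  -- big-M precedence constraint for any distinct pair
  have hedge : ∀ p q : Fin N, p ≠ q →
      c s p + l s p / 2 ≤ c s q - l s q / 2 + L s * (1 - z s p q) := by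
    intro p q hpq
    rcases lt_or_gt_of_ne hpq with h | h
    · have := (hFRU p q h).2.2.1 s 0
      simpa [restr, restrz, show (1 : Fin 2) - 0 = 1 by decide] using this
    · have := (hFRU q p h).2.2.1 s 1
      simpa [restr, restrz, show (1 : Fin 2) - 1 = 0 by decide] using this
  -- lower bounds on lengths
  have hlbl : ∀ p q : Fin N, p ≠ q → lb s p ≤ l s p := by
    intro p q hpq
    rcases lt_or_gt_of_ne hpq with h | h
    · have := (hFRU p q h).2.2.2.1 s 0
      simpa [restr] using this
    · have := (hFRU q p h).2.2.2.1 s 1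
      simpa [restr] using this
  have hij : t 0 ≠ t (m + 1) := hdistinct 0 (m + 1) (by omega) (by omega) (by omega)
  have hzij : 0 ≤ L s * (1 - z s (t 0) (t (m + 1))) := by
    rcases hbin _ _ hij with h | h <;> rw [h] <;> nlinarith [hL s]
  by_cases hall : ∀ ξ ∈ Finset.Icc 1 (m + 1), z s (t (ξ - 1)) (t ξ) = 1
  · -- all path variables equal 1 : chain the precedences
    have hsum0 : (∑ ξ ∈ Finset.Icc 1 (m + 1), (z s (t (ξ - 1)) (t ξ) - 1)) = 0 :=
      Finset.sum_eq_zero (fun ξ hξ => by rw [hall ξ hξ]; ring)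
    have chain : ∀ k : ℕ, 1 ≤ k → k ≤ m + 1 →
        c s (t 0) + l s (t 0) / 2 + ∑ ξ ∈ Finset.Icc 1 (k - 1), lb s (t ξ) ≤
          c s (t k) - l s (t k) / 2 := by
      intro k hk1
      induction k, hk1 using Nat.le_induction with
      | base =>
        intro _
        have h1 : z s (t 0) (t 1) = 1 := by
          have := hall 1 (Finset.mem_Icc.mpr ⟨by omega, by omega⟩)
          simpa using this
        have := hedge (t 0) (t 1) (hdistinct 0 1 (by omega) (by omega) (by omega))
        rw [h1] at this
        simpa using this
      | succ n hn ih =>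
        intro hle
        obtain ⟨n', rfl⟩ : ∃ n', n = n' + 1 := ⟨n - 1, by omega⟩
        have ihh := ih (by omega)
        have hzedge : z s (t (n' + 1)) (t (n' + 2)) = 1 := by
          have := hall (n' + 2) (Finset.mem_Icc.mpr ⟨by omega, by omega⟩)
          simpa using this
        have he := hedge (t (n' + 1)) (t (n' + 2))
          (hdistinct (n' + 1) (n' + 2) (by omega) (by omega) (by omega))
        rw [hzedge] at he
        have hl1 : lb s (t (n' + 1)) ≤ l s (t (n' + 1)) :=
          hlbl (t (n' + 1)) (t 0) (Ne.symm (hdistinct 0 (n' + 1) (by omega) (by omega) (by omega)))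
        have hs : (∑ ξ ∈ Finset.Icc 1 (n' + 1 + 1 - 1), lb s (t ξ)) =
            (∑ ξ ∈ Finset.Icc 1 (n' + 1 - 1), lb s (t ξ)) + lb s (t (n' + 1)) := by
          have : n' + 1 + 1 - 1 = n' + 1 := by omega
          rw [this, Finset.sum_Icc_succ_top (by omega : 1 ≤ n' + 1),
            show n' + 1 - 1 = n' from rfl]
        rw [hs]
        simp only [show (1 : ℝ) - 1 = 0 from by ring, mul_zero, add_zero] at he
        linarith
    have hfin := chain (m + 1) (by omega) (by omega)
    simp only [show m + 1 - 1 = m from by omega] at hfin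
    rw [hsum0]
    linarith
  · -- some path variable is 0 : the multiplier is nonpositive
    push_neg at hall
    obtain ⟨ξ0, hξ0mem, hξ0⟩ := hall
    have hξ0' : z s (t (ξ0 - 1)) (t ξ0) = 0 := by
      rcases hbin (t (ξ0 - 1)) (t ξ0)
          (hdistinct (ξ0 - 1) ξ0 (by simp at hξ0mem; omega) (by simp at hξ0mem; omega)
            (by simp at hξ0mem; omega)) with h | h
      · exact h
      · exact absurd h hξ0
    have hterms : ∀ ξ ∈ Finset.Icc 1 (m + 1), z s (t (ξ - 1)) (t ξ) - 1 ≤ 0 := by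
      intro ξ hξ
      simp only [Finset.mem_Icc] at hξ
      rcases hbin (t (ξ - 1)) (t ξ)
          (hdistinct (ξ - 1) ξ (by omega) (by omega) (by omega)) with h | h <;>
        rw [h] <;> norm_num
    have hsumle : (∑ ξ ∈ Finset.Icc 1 (m + 1), (z s (t (ξ - 1)) (t ξ) - 1)) ≤ -1 := by
      rw [← Finset.add_sum_erase _ _ hξ0mem, hξ0']
      have : (∑ ξ ∈ (Finset.Icc 1 (m + 1)).erase ξ0, (z s (t (ξ - 1)) (t ξ) - 1)) ≤ 0 :=
        Finset.sum_nonpos (fun ξ hξ => hterms ξ (Finset.mem_of_mem_erase hξ))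
      linarith
    have hγ : 0 ≤ ∑ ξ ∈ Finset.Icc 1 m, lb s (t ξ) :=
      Finset.sum_nonneg (fun ξ _ => le_of_lt (hlb s (t ξ)))
    have hmul : (∑ ξ ∈ Finset.Icc 1 m, lb s (t ξ)) *
        (1 + ∑ ξ ∈ Finset.Icc 1 (m + 1), (z s (t (ξ - 1)) (t ξ) - 1)) ≤ 0 :=
      mul_nonpos_of_nonneg_of_nonpos hγ (by linarith)
    have := hedge (t 0) (t (m + 1)) hij
    linarith
end
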